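/- arXiv:1809.07126 — 8 statements merged into one kernel-verified Lean document; each statement's English description precedes it below -/
import Mathlib

section
/- Let H be a complex Hilbert space, let A and L be bounded self-adjoint operators on H, let h > 0 and ε₀ > 0, and suppose that ⟨(i/h)(LA − AL)u, u⟩ ≥ ε₀‖u‖² for every u ∈ H (note that i(LA − AL) is self-adjoint, so this quadratic form is real-valued). Then for every w ∈ H and every T ≥ 0, setting v(t) := e^{i t h⁻¹ A} w, one has ⟨L v(T), v(T)⟩ ≥ ⟨L w, w⟩ + ε₀ T ‖w‖². -/
open scoped ComplexInnerProductSpace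

open NormedSpace in
private lemma v_hasDerivAt
    {H : Type*} [NormedAddCommGroup H] [InnerProductSpace ℂ H] [CompleteSpace H]
    (A : H →L[ℂ] H) (h : ℝ) (w : H) (v : ℝ → H)
    (hv : ∀ t : ℝ, v t = NormedSpace.exp (((Complex.I * (t : ℂ)) / (h : ℂ)) • A) w)
    (t : ℝ) :
    HasDerivAt v ((Complex.I / (h : ℂ)) • A (v t)) t := by
  have hφ : HasDerivAt (fun t : ℝ => Complex.I * (t : ℂ) / (h : ℂ))
      (Complex.I / (h : ℂ)) t := by
    have h1 : HasDerivAt (fun t : ℝ => (t : ℂ)) 1 t := by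
      simpa using (hasDerivAt_id t).ofReal_comp
    have h2 : (fun t : ℝ => Complex.I * (t : ℂ) / (h : ℂ))
        = fun t : ℝ => (Complex.I / (h : ℂ)) * (t : ℂ) := by funext s; ring
    rw [h2]
    simpa using h1.const_mul (Complex.I / (h : ℂ))
  have hE : HasDerivAt (fun u : ℂ => exp (u • A))
      (A * exp ((Complex.I * (t : ℂ) / (h : ℂ)) • A)) (Complex.I * (t : ℂ) / (h : ℂ)) :=
    hasDerivAt_exp_smul_const' A _
  have hcomp : HasDerivAt (fun s : ℝ => exp ((Complex.I * (s : ℂ) / (h : ℂ)) • A))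
      ((Complex.I / (h : ℂ)) • (A * exp ((Complex.I * (t : ℂ) / (h : ℂ)) • A))) t :=
    by have := hE.scomp t hφ; exact this
  have happ := ((ContinuousLinearMap.apply ℂ H w).restrictScalars ℝ).hasFDerivAt.comp_hasDerivAt
    t hcomp
  have hvfun : v = fun s : ℝ => exp ((Complex.I * (s : ℂ) / (h : ℂ)) • A) w := funext hv
  rw [hvfun]
  simpa [ContinuousLinearMap.smul_apply, ContinuousLinearMap.mul_apply, hv t, Function.comp_def] using happ

/-- Abstract positive-commutator propagation estimate: if the quadratic form of
`(i/h)(LA - AL)` is bounded below by `ε₀‖u‖²`, then `⟨L v(T), v(T)⟩` grows at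
least linearly along the unitary group `v(t) = e^{i t h⁻¹ A} w`.  Inner
products `⟨a, b⟩` of the informal statement (linear in the first argument) are
rendered as `⟪b, a⟫` (Mathlib's convention), with `Complex.re` extracting their
(a priori real) values. -/
theorem positive_commutator_growth
    {H : Type*} [NormedAddCommGroup H] [InnerProductSpace ℂ H] [CompleteSpace H]
    (A L : H →L[ℂ] H) (hA : IsSelfAdjoint A) (hL : IsSelfAdjoint L)
    (h ε₀ : ℝ) (hh : 0 < h) (hε₀ : 0 < ε₀)
    (hcomm : ∀ u : H,
      (⟪u, ((Complex.I / (h : ℂ)) • (L ∘L A - A ∘L L)) u⟫).re ≥ ε₀ * ‖u‖ ^ 2)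
    (w : H) (T : ℝ) (hT : 0 ≤ T)
    (v : ℝ → H)
    (hv : ∀ t : ℝ, v t = NormedSpace.exp (((Complex.I * (t : ℂ)) / (h : ℂ)) • A) w) :
    (⟪v T, L (v T)⟫).re ≥ (⟪w, L w⟫).re + ε₀ * T * ‖w‖ ^ 2 := by
  have hAsym : ∀ x y : H, ⟪A x, y⟫ = ⟪x, A y⟫ := fun x y => hA.isSymmetric x y
  have hv0 : v 0 = w := by simp [hv 0, NormedSpace.exp_zero]
  have hvd : ∀ t, HasDerivAt v ((Complex.I / (h : ℂ)) • A (v t)) t :=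
    v_hasDerivAt A h w v hv
  have hconjc : (starRingEnd ℂ) (Complex.I / (h : ℂ)) = -(Complex.I / (h : ℂ)) := by
    simp [map_div₀, Complex.conj_I, Complex.conj_ofReal, neg_div]
  -- norm is constant
  have hnorm : ∀ t, ‖v t‖ ^ 2 = ‖w‖ ^ 2 := by
    have hg : ∀ t, HasDerivAt (fun s => (⟪v s, v s⟫).re) 0 t := by
      intro t
      have := ((hvd t).inner ℂ (hvd t))
      have h0 : ⟪v t, (Complex.I / (h : ℂ)) • A (v t)⟫
          + ⟪(Complex.I / (h : ℂ)) • A (v t), v t⟫ = 0 := by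
        rw [inner_smul_right, inner_smul_left, hconjc, hAsym (v t) (v t)]
        ring
      rw [h0] at this
      simpa [Function.comp_def] using (Complex.reCLM.hasFDerivAt.comp_hasDerivAt t this)
    have hconst := is_const_of_deriv_eq_zero
      (fun t => (hg t).differentiableAt) (fun t => (hg t).deriv)
    intro t
    have := hconst t 0
    rw [hv0] at this
    rw [← inner_self_eq_norm_sq (𝕜 := ℂ) (v t), ← inner_self_eq_norm_sq (𝕜 := ℂ) w]
    exact this
  -- the energy function and its derivative
  set f : ℝ → ℝ := fun t => (⟪v t, L (v t)⟫).re with hf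
  have hfd : ∀ t, HasDerivAt f
      ((⟪v t, ((Complex.I / (h : ℂ)) • (L ∘L A - A ∘L L)) (v t)⟫).re) t := by
    intro t
    have hLv : HasDerivAt (fun s => L (v s)) (L ((Complex.I / (h : ℂ)) • A (v t))) t := by
      simpa [Function.comp_def] using (L.restrictScalars ℝ).hasFDerivAt.comp_hasDerivAt t (hvd t)
    have hin := (hvd t).inner ℂ hLv
    have heq : ⟪v t, L ((Complex.I / (h : ℂ)) • A (v t))⟫
        + ⟪(Complex.I / (h : ℂ)) • A (v t), L (v t)⟫
        = ⟪v t, ((Complex.I / (h : ℂ)) • (L ∘L A - A ∘L L)) (v t)⟫ := by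
      rw [map_smul, inner_smul_right, inner_smul_left, hconjc,
        hAsym (v t) (L (v t))]
      simp only [ContinuousLinearMap.smul_apply, ContinuousLinearMap.sub_apply,
        ContinuousLinearMap.comp_apply, inner_smul_right, inner_sub_right]
      ring
    rw [heq] at hin
    simpa [Function.comp_def] using (Complex.reCLM.hasFDerivAt.comp_hasDerivAt t hin)
  -- monotonicity
  set g : ℝ → ℝ := fun t => f t - ε₀ * ‖w‖ ^ 2 * t with hgdef
  have hgd : ∀ t, HasDerivAt g
      ((⟪v t, ((Complex.I / (h : ℂ)) • (L ∘L A - A ∘L L)) (v t)⟫).re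
        - ε₀ * ‖w‖ ^ 2) t := by
    intro t
    simpa [Pi.sub_def] using (hfd t).sub ((hasDerivAt_id t).const_mul (ε₀ * ‖w‖ ^ 2))
  have hmono : Monotone g := by
    apply monotone_of_deriv_nonneg (fun t => (hgd t).differentiableAt)
    intro t
    rw [(hgd t).deriv]
    have := hcomm (v t)
    rw [hnorm t] at this
    linarith
  have := hmono hT
  simp only [hgdef, hf, hv0, mul_zero, sub_zero] at this
  nlinarith [this]
end

section
/- Let H be a complex Hilbert space, let A and L be bounded self-adjoint operators on H, let h > 0, τ ∈ ℝ, ε₁ > 0 and C ≥ 0, and suppose that ⟨(i/h)(AL − LA)u, u⟩ ≥ ε₁‖u‖² − C‖(A − τ)u‖² for every u ∈ H (the quadratic form of i(AL − LA) is real-valued since this operator is self-adjoint). Let w ∈ H and η ≥ 0 satisfy ‖(A − τ)w‖ ≤ η‖w‖, and set v(t) := e^{i t h⁻¹ A} w. Then for every T ≥ 0 one has ⟨L v(T), v(T)⟩ ≤ ⟨L w, w⟩ − (ε₁ − Cη²) T ‖w‖². -/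
open scoped ComplexInnerProductSpace

open NormedSpace in
private lemma exp_deriv_aux {H : Type*} [NormedAddCommGroup H] [InnerProductSpace ℂ H]
    [CompleteSpace H] (A : H →L[ℂ] H) (c : ℂ) (w : H) (t : ℝ) :
    HasDerivAt (fun s : ℝ => exp ((c * (s : ℂ)) • A) w)
      (c • A (exp ((c * (t : ℂ)) • A) w)) t := by
  have h1 : HasDerivAt (fun z : ℂ => exp (z • A)) (A * exp ((c * (t : ℂ)) • A))
      (c * (t : ℂ)) := hasDerivAt_exp_smul_const' (𝕂 := ℂ) A _
  have h2 : HasDerivAt (fun s : ℝ => (c * (s : ℂ))) c t := by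
    simpa using (Complex.ofRealCLM.hasDerivAt (x := t)).const_mul c
  have h3 := HasDerivAt.scomp_of_eq t h1 h2 rfl
  have h4 := (((ContinuousLinearMap.apply ℂ H w).restrictScalars ℝ).hasFDerivAt).comp_hasDerivAt
    t h3
  simpa [Function.comp_def, ContinuousLinearMap.smul_apply, ContinuousLinearMap.mul_apply] using h4

private lemma norm_const_aux {H : Type*} [NormedAddCommGroup H] [InnerProductSpace ℂ H]
    [CompleteSpace H] (A : H →L[ℂ] H) (hA : IsSelfAdjoint A) (c : ℂ)
    (hc : (starRingEnd ℂ) c = -c) (u : ℝ → H)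
    (hu : ∀ t : ℝ, HasDerivAt u (c • A (u t)) t) (t : ℝ) : ‖u t‖ = ‖u 0‖ := by
  have hsym : ∀ x y : H, (⟪A x, y⟫ : ℂ) = ⟪x, A y⟫ := fun x y => hA.isSymmetric x y
  have key : ∀ s : ℝ, HasDerivAt (fun r : ℝ => (⟪u r, u r⟫ : ℂ)) 0 s := by
    intro s
    have hd := (hu s).inner ℂ (hu s)
    have hz : (⟪u s, c • A (u s)⟫ : ℂ) + ⟪c • A (u s), u s⟫ = 0 := by
      rw [inner_smul_right, inner_smul_left, hc, hsym]
      ring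
    rwa [hz] at hd
  have hconst : (⟪u t, u t⟫ : ℂ) = ⟪u 0, u 0⟫ := by
    have hdiff : Differentiable ℝ (fun r : ℝ => (⟪u r, u r⟫ : ℂ)) :=
      fun s => (key s).differentiableAt
    have hfd : ∀ s : ℝ, fderiv ℝ (fun r : ℝ => (⟪u r, u r⟫ : ℂ)) s = 0 := by
      intro s
      have hds := (key s).deriv
      ext
      rw [← toSpanSingleton_deriv, hds]
      simp
    exact is_const_of_fderiv_eq_zero hdiff hfd t 0
  have h2 : ‖u t‖ ^ 2 = ‖u 0‖ ^ 2 := by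
    have h1 := congrArg Complex.re hconst
    rw [← RCLike.re_to_complex, ← RCLike.re_to_complex, inner_self_eq_norm_sq,
      inner_self_eq_norm_sq] at h1
    exact h1
  calc ‖u t‖ = Real.sqrt (‖u t‖ ^ 2) := (Real.sqrt_sq (norm_nonneg _)).symm
    _ = Real.sqrt (‖u 0‖ ^ 2) := by rw [h2]
    _ = ‖u 0‖ := Real.sqrt_sq (norm_nonneg _)

/-- Abstract commutator estimate with spectral-localization error: if the
quadratic form of `(i/h)(AL - LA)` is bounded below by
`ε₁‖u‖² - C‖(A - τ)u‖²` and `w` is spectrally localized in the sense that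
`‖(A - τ)w‖ ≤ η‖w‖`, then `⟨L v(t), v(t)⟩` decays at least linearly along the
unitary group `v(t) = e^{i t h⁻¹ A} w`.  Inner products `⟨a, b⟩` of the
informal statement (linear in the first argument) are rendered as `⟪b, a⟫`
(Mathlib's convention), with `Complex.re` extracting their (a priori real)
values. -/
theorem commutator_decay_spectrally_localized
    {H : Type*} [NormedAddCommGroup H] [InnerProductSpace ℂ H] [CompleteSpace H]
    (A L : H →L[ℂ] H) (hA : IsSelfAdjoint A) (hL : IsSelfAdjoint L)
    (h τ ε₁ C : ℝ) (hh : 0 < h) (hε₁ : 0 < ε₁) (hC : 0 ≤ C)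
    (hcomm : ∀ u : H,
      (⟪u, ((Complex.I / (h : ℂ)) • (A ∘L L - L ∘L A)) u⟫).re
        ≥ ε₁ * ‖u‖ ^ 2 - C * ‖(A - (τ : ℂ) • (1 : H →L[ℂ] H)) u‖ ^ 2)
    (w : H) (η : ℝ) (hη : 0 ≤ η)
    (hw : ‖(A - (τ : ℂ) • (1 : H →L[ℂ] H)) w‖ ≤ η * ‖w‖)
    (v : ℝ → H)
    (hv : ∀ t : ℝ, v t = NormedSpace.exp (((Complex.I * (t : ℂ)) / (h : ℂ)) • A) w)
    (T : ℝ) (hT : 0 ≤ T) :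
    (⟪v T, L (v T)⟫).re ≤ (⟪w, L w⟫).re - (ε₁ - C * η ^ 2) * T * ‖w‖ ^ 2 := by
  set c : ℂ := Complex.I / (h : ℂ) with hc_def
  have hcconj : (starRingEnd ℂ) c = -c := by
    simp [hc_def, map_div₀, Complex.conj_I, neg_div]
  have hsym : ∀ x y : H, (⟪A x, y⟫ : ℂ) = ⟪x, A y⟫ := fun x y => hA.isSymmetric x y
  have hv2 : ∀ t : ℝ, v t = NormedSpace.exp ((c * (t : ℂ)) • A) w := by
    intro t
    rw [hv t, div_mul_eq_mul_div]
  have hv' : ∀ t : ℝ, HasDerivAt v (c • A (v t)) t := by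
    intro t
    have hd := exp_deriv_aux A c w t
    simp only [← hv2] at hd
    exact hd
  have hv0 : v 0 = w := by
    rw [hv2 0]
    simp
  set B : H →L[ℂ] H := A - (τ : ℂ) • (1 : H →L[ℂ] H) with hB_def
  have hnv : ∀ t : ℝ, ‖v t‖ = ‖w‖ := by
    intro t
    have hh0 := norm_const_aux A hA c hcconj v hv' t
    rwa [hv0] at hh0
  have hAB : ∀ x : H, B (A x) = A (B x) := by
    intro x
    simp [hB_def, map_smul]
  have hnB : ∀ t : ℝ, ‖B (v t)‖ = ‖B w‖ := by
    intro t
    have hu : ∀ s : ℝ, HasDerivAt (fun r : ℝ => B (v r)) (c • A (B (v s))) s := by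
      intro s
      have hd := ((B.restrictScalars ℝ).hasFDerivAt).comp_hasDerivAt s (hv' s)
      simpa [Function.comp_def, map_smul, hAB] using hd
    have hd := norm_const_aux A hA c hcconj (fun r => B (v r)) hu t
    rwa [hv0] at hd
  set K : ℝ := (ε₁ - C * η ^ 2) * ‖w‖ ^ 2 with hK_def
  have hBw : ‖B w‖ ^ 2 ≤ η ^ 2 * ‖w‖ ^ 2 := by
    have h0 : (0 : ℝ) ≤ ‖B w‖ := norm_nonneg _
    nlinarith [norm_nonneg w]
  have hf : ∀ t : ℝ, HasDerivAt (fun s : ℝ => (⟪v s, L (v s)⟫ : ℂ).re)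
      (-(⟪v t, ((c • (A ∘L L - L ∘L A)) (v t))⟫ : ℂ).re) t := by
    intro t
    have hLv : HasDerivAt (fun s : ℝ => L (v s)) (L (c • A (v t))) t := by
      have hd := ((L.restrictScalars ℝ).hasFDerivAt).comp_hasDerivAt t (hv' t)
      simpa [Function.comp_def] using hd
    have hd := (hv' t).inner ℂ hLv
    have hz : (⟪v t, L (c • A (v t))⟫ : ℂ) + ⟪c • A (v t), L (v t)⟫
        = -(⟪v t, ((c • (A ∘L L - L ∘L A)) (v t))⟫ : ℂ) := by
      rw [map_smul, inner_smul_right, inner_smul_left, hcconj, hsym]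
      simp only [ContinuousLinearMap.smul_apply, ContinuousLinearMap.sub_apply,
        ContinuousLinearMap.coe_comp', Function.comp_apply, inner_smul_right, inner_sub_right]
      ring
    rw [hz] at hd
    have hre := Complex.reCLM.hasFDerivAt.comp_hasDerivAt t hd
    simpa [Function.comp_def] using hre
  have hbound : ∀ t : ℝ, -(⟪v t, ((c • (A ∘L L - L ∘L A)) (v t))⟫ : ℂ).re ≤ -K := by
    intro t
    have h1 := hcomm (v t)
    rw [hnv t, hnB t] at h1
    have hmul : C * ‖B w‖ ^ 2 ≤ C * (η ^ 2 * ‖w‖ ^ 2) := mul_le_mul_of_nonneg_left hBw hC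
    have hK : K ≤ (⟪v t, ((c • (A ∘L L - L ∘L A)) (v t))⟫ : ℂ).re := by
      simp only [hK_def]
      nlinarith [h1, hmul]
    linarith
  have hlin : ∀ t : ℝ, HasDerivAt (fun s : ℝ => K * s) K t := fun t => by
    simpa using (hasDerivAt_id t).const_mul K
  have hganti : Antitone (fun t : ℝ => (⟪v t, L (v t)⟫ : ℂ).re + K * t) := by
    apply antitone_of_deriv_nonpos
    · exact fun t => ((hf t).add (hlin t)).differentiableAt
    · intro t
      have hsum : HasDerivAt (fun s : ℝ => (⟪v s, L (v s)⟫ : ℂ).re + K * s) _ t := (hf t).add (hlin t)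
      rw [hsum.deriv]
      have := hbound t
      linarith
  have hfin := hganti hT
  simp only [hv0, mul_zero, add_zero] at hfin
  have hKT : K * T = (ε₁ - C * η ^ 2) * T * ‖w‖ ^ 2 := by rw [hK_def]; ring
  linarith
end

section
/- In the scalar symbol setting: for every ε′ > 0 there exist ε > 0, ϵ > 0 and ε₂ > 0 (depending only on d, m, δ, λ, ε₀, c₀, C₀ and the constants c_{αβ}) such that if the perturbation V satisfies the smallness bound |∂_ξ^α ∂_x^β V(x,ξ)| ≤ ε for all |α| + |β| ≤ 1, then every Hamiltonian trajectory (x(t), ξ(t)), t ∈ ℝ, of H = A⁰ + V on an energy level τ with |τ − λ| ≤ ϵ satisfies |ξ(t) − ξ(0)| ≤ ε′ and |x(t) − x(0)| ≥ ε₂|t| for all t ∈ ℝ. -/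
open scoped RealInnerProductSpace

open Set


private lemma min_le_rpow_interp {a b θ : ℝ} (ha : 0 ≤ a) (hb : 0 ≤ b)
    (h0 : 0 ≤ θ) (h1 : θ ≤ 1) : min a b ≤ a ^ θ * b ^ (1 - θ) := by
  have hm : 0 ≤ min a b := le_min ha hb
  rcases eq_or_lt_of_le hm with h | h
  · rw [← h]; positivity
  · calc min a b = (min a b) ^ θ * (min a b) ^ (1 - θ) := by
          rw [← Real.rpow_add h, add_sub_cancel, Real.rpow_one]
      _ ≤ a ^ θ * b ^ (1 - θ) :=
          mul_le_mul (Real.rpow_le_rpow hm (min_le_left a b) h0)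
            (Real.rpow_le_rpow hm (min_le_right a b) (by linarith))
            (Real.rpow_nonneg hm _) (Real.rpow_nonneg ha _)

private lemma exists_G {p : ℝ} (hp : 0 < p) :
    ∃ G : ℝ → ℝ, (∀ u : ℝ, HasDerivAt G ((1 + |u|) ^ (-(1 + p))) u) ∧
      (∀ a b : ℝ, G b - G a ≤ 2 / p) := by
  set Gp : ℝ → ℝ := fun u => (2 - (1 + u) ^ (-p)) / p with hGp
  set Gm : ℝ → ℝ := fun u => ((1 - u) ^ (-p)) / p with hGm
  have hGpd : ∀ u : ℝ, -1 < u → HasDerivAt Gp ((1 + u) ^ (-(1 + p))) u := by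
    intro u hu
    have hpos : (0:ℝ) < 1 + u := by linarith
    have h1 : HasDerivAt (fun v : ℝ => 1 + v) 1 u := (hasDerivAt_id u).const_add 1
    have h2 := h1.rpow_const (p := -p) (Or.inl hpos.ne')
    have h3 := ((hasDerivAt_const u (2:ℝ)).sub h2).div_const p
    refine h3.congr_deriv ?_
    rw [show (-p - 1 : ℝ) = -(1+p) by ring]
    field_simp
    ring
  have hGmd : ∀ u : ℝ, u < 1 → HasDerivAt Gm ((1 - u) ^ (-(1 + p))) u := by
    intro u hu
    have hpos : (0:ℝ) < 1 - u := by linarith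
    have h1 : HasDerivAt (fun v : ℝ => 1 - v) (-1) u := (hasDerivAt_id u).const_sub 1
    have h2 := h1.rpow_const (p := -p) (Or.inl hpos.ne')
    have h3 := h2.div_const p
    refine h3.congr_deriv ?_
    rw [show (-p - 1 : ℝ) = -(1+p) by ring]
    field_simp
  refine ⟨fun u => if 0 ≤ u then Gp u else Gm u, ?_, ?_⟩
  · intro u
    rcases lt_trichotomy u 0 with hu | hu | hu
    · have heq : (fun v : ℝ => if 0 ≤ v then Gp v else Gm v) =ᶠ[nhds u] Gm := by
        filter_upwards [Iio_mem_nhds hu] with v hv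
        exact if_neg (not_le.2 hv)
      have h := (hGmd u (by linarith)).congr_of_eventuallyEq heq
      refine h.congr_deriv ?_
      rw [abs_of_neg hu]; ring
    · subst hu
      have e : ((1:ℝ) + |(0:ℝ)|) ^ (-(1+p)) = ((1:ℝ)) ^ (-(1+p)) := by norm_num
      rw [e]
      have hIci : HasDerivWithinAt (fun v : ℝ => if 0 ≤ v then Gp v else Gm v)
          (((1:ℝ)) ^ (-(1+p))) (Ici 0) 0 := by
        have h := (hGpd 0 (by norm_num)).hasDerivWithinAt (s := Ici (0:ℝ))
        rw [show ((1:ℝ) + 0) = 1 by norm_num] at h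
        exact h.congr (fun v hv => if_pos (show (0:ℝ) ≤ v from hv))
          (if_pos (le_refl (0:ℝ)))
      have hIic : HasDerivWithinAt (fun v : ℝ => if 0 ≤ v then Gp v else Gm v)
          (((1:ℝ)) ^ (-(1+p))) (Iic 0) 0 := by
        have h := (hGmd 0 (by norm_num)).hasDerivWithinAt (s := Iic (0:ℝ))
        rw [show ((1:ℝ) - 0) = 1 by norm_num] at h
        have heq : ∀ v ∈ Iic (0:ℝ), (if 0 ≤ v then Gp v else Gm v) = Gm v := by
          intro v hv
          rcases eq_or_lt_of_le (show v ≤ (0:ℝ) from hv) with h' | h'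
          · subst h'
            rw [if_pos (le_refl (0:ℝ)), hGp, hGm]
            norm_num
          · exact if_neg (not_le.2 h')
        exact h.congr heq (heq 0 (le_refl (0:ℝ)))
      have h := hIic.union hIci
      rwa [Iic_union_Ici, hasDerivWithinAt_univ] at h
    · have heq : (fun v : ℝ => if 0 ≤ v then Gp v else Gm v) =ᶠ[nhds u] Gp := by
        filter_upwards [Ioi_mem_nhds hu] with v hv
        exact if_pos (le_of_lt hv)
      have h := (hGpd u (by linarith)).congr_of_eventuallyEq heq
      refine h.congr_deriv ?_
      rw [abs_of_pos hu]
  · have hbnd : ∀ u : ℝ, 0 ≤ (if 0 ≤ u then Gp u else Gm u) ∧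
        (if 0 ≤ u then Gp u else Gm u) ≤ 2 / p := by
      intro u
      by_cases h : 0 ≤ u
      · rw [if_pos h]
        have h1 : (0:ℝ) < (1 + u) ^ (-p) := Real.rpow_pos_of_pos (by linarith) _
        have h2 : (1 + u) ^ (-p) ≤ 1 :=
          Real.rpow_le_one_of_one_le_of_nonpos (by linarith) (by linarith)
        constructor
        · apply div_nonneg (by linarith) hp.le
        · show (2 - (1 + u) ^ (-p)) / p ≤ 2 / p
          gcongr <;> linarith
      · rw [if_neg h]
        push_neg at h
        have h0 : (0:ℝ) < 1 - u := by linarith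
        have h1 : (0:ℝ) < (1 - u) ^ (-p) := Real.rpow_pos_of_pos h0 _
        have h2 : (1 - u) ^ (-p) ≤ 1 :=
          Real.rpow_le_one_of_one_le_of_nonpos (by linarith) (by linarith)
        constructor
        · positivity
        · show ((1 - u) ^ (-p)) / p ≤ 2 / p
          gcongr <;> linarith
    intro a b
    have ha := hbnd a
    have hb := hbnd b
    linarith [ha.1, hb.2]

set_option maxHeartbeats 2000000 in
/-- Hamiltonian trajectories of `H = A⁰ + V` on energy levels near `λ` have
small momentum variation and escape linearly, provided the perturbation `V` is
small in `C¹`.  The thresholds `ε, ϵ, ε₂` depend only on `d, m, δ, λ, ε₀, c₀,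
C₀` and the constants `cA` (for `A⁰`) and `cV` (for `V`), not on `A⁰, V`
themselves. -/
theorem trajectories_escape_linearly
    (d : ℕ) (hd : 1 ≤ d) (m δ lam ε₀ c₀ C₀ : ℝ)
    (hm : 0 < m) (hδ : 0 < δ) (hε₀ : 0 < ε₀) (hc₀ : 0 < c₀)
    (cA : ℕ → ℝ) (cV : ℕ → ℕ → ℝ)
    (ε' : ℝ) (hε' : 0 < ε') :
    ∃ ε > (0 : ℝ), ∃ ϵ > (0 : ℝ), ∃ ε₂ > (0 : ℝ),
      ∀ (A0 : EuclideanSpace ℝ (Fin d) → ℝ)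
        (V : EuclideanSpace ℝ (Fin d) → EuclideanSpace ℝ (Fin d) → ℝ),
        -- `A⁰` is smooth with polynomially bounded derivatives
        ContDiff ℝ (⊤ : ℕ∞) A0 →
        (∀ (n : ℕ) (ξ : EuclideanSpace ℝ (Fin d)),
            ‖iteratedFDeriv ℝ n A0 ξ‖ ≤ cA n * (1 + ‖ξ‖) ^ m) →
        -- ellipticity
        (∀ ξ : EuclideanSpace ℝ (Fin d), A0 ξ ≥ c₀ * ‖ξ‖ ^ m - C₀) →
        -- ξ-microhyperbolicity of `A⁰` at energy level `λ`
        (∀ ξ : EuclideanSpace ℝ (Fin d), ∃ l : EuclideanSpace ℝ (Fin d),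
            ‖l‖ ≤ 1 ∧ ⟪l, gradient A0 ξ⟫ + |A0 ξ - lam| ≥ ε₀) →
        -- `V` is smooth with the symbol-type decay bounds
        ContDiff ℝ (⊤ : ℕ∞)
          (fun p : EuclideanSpace ℝ (Fin d) × EuclideanSpace ℝ (Fin d) => V p.1 p.2) →
        (∀ (k n : ℕ) (x ξ : EuclideanSpace ℝ (Fin d)),
            ‖iteratedFDeriv ℝ n
                (fun x' => iteratedFDeriv ℝ k (fun ξ' => V x' ξ') ξ) x‖
              ≤ cV k n * (1 + ‖ξ‖) ^ m * (1 + ‖x‖) ^ (-δ - (n : ℝ))) →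
        -- smallness of `V` up to first order
        (∀ x ξ : EuclideanSpace ℝ (Fin d), |V x ξ| ≤ ε) →
        (∀ x ξ : EuclideanSpace ℝ (Fin d), ‖gradient (fun x' => V x' ξ) x‖ ≤ ε) →
        (∀ x ξ : EuclideanSpace ℝ (Fin d), ‖gradient (fun ξ' => V x ξ') ξ‖ ≤ ε) →
        -- Hamiltonian trajectory on energy level `τ` with `|τ - λ| ≤ ϵ`
        ∀ (x ξ : ℝ → EuclideanSpace ℝ (Fin d)) (τ : ℝ),
          (∀ t : ℝ,
            HasDerivAt x (gradient (fun ξ' => A0 ξ' + V (x t) ξ') (ξ t)) t) →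
          (∀ t : ℝ,
            HasDerivAt ξ (-gradient (fun x' => A0 (ξ t) + V x' (ξ t)) (x t)) t) →
          (∀ t : ℝ, A0 (ξ t) + V (x t) (ξ t) = τ) →
          |τ - lam| ≤ ϵ →
          ∀ t : ℝ, ‖ξ t - ξ 0‖ ≤ ε' ∧ ‖x t - x 0‖ ≥ ε₂ * |t| := by
  -- constants
  set θ : ℝ := δ / (2 * (1 + δ)) with hθdef
  have hθpos : 0 < θ := by positivity
  have hθ1 : θ < 1 := by
    rw [hθdef, div_lt_one (by positivity)]; linarith
  have hexp : (1 - θ) * (1 + δ) = 1 + δ / 2 := by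
    rw [hθdef]; field_simp; ring
  set K : ℝ := max 1 ((lam + 2 + C₀) / c₀) with hKdef
  have hK1 : (1:ℝ) ≤ K := le_max_left _ _
  set ρ : ℝ := max 1 (K ^ (1 / m)) with hρdef
  have hρ1 : (1:ℝ) ≤ ρ := le_max_left _ _
  set L : ℝ := max 1 (max 0 (cA 2) * (1 + ρ) ^ m) with hLdef
  have hL1 : (1:ℝ) ≤ L := le_max_left _ _
  set C : ℝ := max 0 (cV 0 1) * (1 + ρ) ^ m + 1 with hCdef
  have hC1 : (1:ℝ) ≤ C := by
    rw [hCdef]; nlinarith [mul_nonneg (le_max_left 0 (cV 0 1)) (Real.rpow_nonneg (by linarith : (0:ℝ) ≤ 1 + ρ) m)]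
  set r : ℝ := min ε' (ε₀ / (8 * L)) with hrdef
  have hrpos : 0 < r := lt_min hε' (by positivity)
  set κ : ℝ := ε₀ / 2 with hκdef
  have hκpos : 0 < κ := by positivity
  set Eε : ℝ := (r * κ * (δ / 2) / (4 * C ^ (1 - θ))) ^ (1 / θ) with hEdef
  have hCθpos : 0 < C ^ (1 - θ) := Real.rpow_pos_of_pos (by linarith) _
  have hEpos : 0 < Eε := Real.rpow_pos_of_pos (by positivity) _
  refine ⟨min (min 1 (ε₀ / 16)) Eε, lt_min (lt_min one_pos (by positivity)) hEpos,
    min 1 (ε₀ / 8), lt_min one_pos (by positivity), κ, hκpos, ?_⟩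
  set ε : ℝ := min (min 1 (ε₀ / 16)) Eε with hεdef
  set ϵ : ℝ := min 1 (ε₀ / 8) with hϵdef
  have hεpos : 0 < ε := lt_min (lt_min one_pos (by positivity)) hEpos
  have hε1 : ε ≤ 1 := le_trans (min_le_left _ _) (min_le_left _ _)
  have hε16 : ε ≤ ε₀ / 16 := le_trans (min_le_left _ _) (min_le_right _ _)
  have hεE : ε ≤ Eε := min_le_right _ _
  have hϵ1 : ϵ ≤ 1 := min_le_left _ _
  have hϵ8 : ϵ ≤ ε₀ / 8 := min_le_right _ _
  have hϵpos : 0 < ϵ := lt_min one_pos (by positivity)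
  intro A0 V hA0c hA0b hEll hMH hVc hVb hVs0 hVsx hVsξ x ξ τ hx hξ hE hτ
  -- differentiability
  have hA0d : Differentiable ℝ A0 := hA0c.differentiable (by simp)
  have hVdx : ∀ ξ₀, Differentiable ℝ (fun x' => V x' ξ₀) := by
    intro ξ₀
    exact (hVc.comp (contDiff_id.prodMk contDiff_const)).differentiable (by simp)
  have hVdξ : ∀ x₀, Differentiable ℝ (fun ξ' => V x₀ ξ') := by
    intro x₀
    exact (hVc.comp (contDiff_const.prodMk contDiff_id)).differentiable (by simp)
  -- gradient algebra
  have hgradsum : ∀ (x₀ ξ₀ : EuclideanSpace ℝ (Fin d)),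
      gradient (fun ξ' => A0 ξ' + V x₀ ξ') ξ₀
        = gradient A0 ξ₀ + gradient (fun ξ' => V x₀ ξ') ξ₀ := by
    intro x₀ ξ₀
    have h : fderiv ℝ (fun ξ' => A0 ξ' + V x₀ ξ') ξ₀
        = fderiv ℝ A0 ξ₀ + fderiv ℝ (fun ξ' => V x₀ ξ') ξ₀ :=
      fderiv_add (hA0d ξ₀) (hVdξ x₀ ξ₀)
    unfold gradient
    rw [h, map_add]
  have hgradconst : ∀ (ξ₀ x₀ : EuclideanSpace ℝ (Fin d)),
      gradient (fun x' => A0 ξ₀ + V x' ξ₀) x₀ = gradient (fun x' => V x' ξ₀) x₀ := by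
    intro ξ₀ x₀
    unfold gradient
    rw [fderiv_const_add]
  have hξ' : ∀ t : ℝ, HasDerivAt ξ (-(gradient (fun x' => V x' (ξ t)) (x t))) t := by
    intro t
    have := hξ t
    rwa [hgradconst] at this
  have hxcont : Continuous x := by
    have h : Differentiable ℝ x := fun t => (hx t).differentiableAt
    exact h.continuous
  have hξcont : Continuous ξ := by
    have h : Differentiable ℝ ξ := fun t => (hξ t).differentiableAt
    exact h.continuous
  -- energy bounds
  have hA0near : ∀ t : ℝ, |A0 (ξ t) - lam| ≤ ϵ + ε := by
    intro t
    have h1 := hE t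
    have h2 := hVs0 (x t) (ξ t)
    have h3 : A0 (ξ t) - lam = (τ - lam) + -(V (x t) (ξ t)) := by linarith
    rw [h3]
    refine (abs_add_le _ _).trans ?_
    rw [abs_neg]
    exact add_le_add hτ h2
  have hshell : ∀ t : ℝ, ‖ξ t‖ ≤ ρ := by
    intro t
    have h1 := hEll (ξ t)
    have h2 := (abs_le.1 (hA0near t)).2
    have h3 : c₀ * ‖ξ t‖ ^ m ≤ lam + 2 + C₀ := by linarith
    have h4 : ‖ξ t‖ ^ m ≤ K := by
      rw [hKdef]
      refine le_trans ?_ (le_max_right _ _)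
      rw [le_div_iff₀ hc₀]
      linarith
    by_cases h5 : ‖ξ t‖ ≤ 1
    · exact h5.trans hρ1
    · push_neg at h5
      have h6 : ‖ξ t‖ = (‖ξ t‖ ^ m) ^ (1 / m) := by
        rw [← Real.rpow_mul (norm_nonneg _), mul_one_div_cancel hm.ne', Real.rpow_one]
      rw [h6, hρdef]
      refine le_trans (Real.rpow_le_rpow (Real.rpow_nonneg (norm_nonneg _) m) h4
        (by positivity)) (le_max_right _ _)
  -- Lipschitz bound for gradient A0
  have hLip : ∀ ξ₁ ξ₂ : EuclideanSpace ℝ (Fin d), ‖ξ₁‖ ≤ ρ → ‖ξ₂‖ ≤ ρ →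
      ‖gradient A0 ξ₁ - gradient A0 ξ₂‖ ≤ L * ‖ξ₁ - ξ₂‖ := by
    intro ξ₁ ξ₂ h₁ h₂
    have hf : ContDiff ℝ (⊤ : ℕ∞) (fderiv ℝ A0) := hA0c.fderiv_right (by simp)
    have hdiff : ∀ y ∈ Metric.closedBall (0 : EuclideanSpace ℝ (Fin d)) ρ,
        DifferentiableAt ℝ (fderiv ℝ A0) y := fun y _ => (hf.differentiable (by simp)) y
    have hb : ∀ y ∈ Metric.closedBall (0 : EuclideanSpace ℝ (Fin d)) ρ,
        ‖fderiv ℝ (fderiv ℝ A0) y‖ ≤ L := by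
      intro y hy
      have hy' : ‖y‖ ≤ ρ := mem_closedBall_zero_iff.1 hy
      have e1 : ‖fderiv ℝ (fderiv ℝ A0) y‖ = ‖iteratedFDeriv ℝ 2 A0 y‖ := by
        calc ‖fderiv ℝ (fderiv ℝ A0) y‖
            = ‖iteratedFDeriv ℝ 0 (fderiv ℝ (fderiv ℝ A0)) y‖ := by
              rw [norm_iteratedFDeriv_zero]
          _ = ‖iteratedFDeriv ℝ 1 (fderiv ℝ A0) y‖ := norm_iteratedFDeriv_fderiv
          _ = ‖iteratedFDeriv ℝ 2 A0 y‖ := norm_iteratedFDeriv_fderiv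
      rw [e1]
      refine (hA0b 2 y).trans ?_
      rw [hLdef]
      refine le_trans ?_ (le_max_right _ _)
      exact mul_le_mul (le_max_right _ _)
        (Real.rpow_le_rpow (by positivity) (by linarith) hm.le)
        (Real.rpow_nonneg (by positivity) _) (le_max_left _ _)
    have key := (convex_closedBall (0 : EuclideanSpace ℝ (Fin d)) ρ).norm_image_sub_le_of_norm_fderiv_le
      hdiff hb (mem_closedBall_zero_iff.2 h₂) (mem_closedBall_zero_iff.2 h₁)
    have e2 : gradient A0 ξ₁ - gradient A0 ξ₂
        = (InnerProductSpace.toDual ℝ (EuclideanSpace ℝ (Fin d))).symm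
            (fderiv ℝ A0 ξ₁ - fderiv ℝ A0 ξ₂) := by
      unfold gradient
      rw [map_sub]
    rw [e2, LinearIsometryEquiv.norm_map]
    exact key
  -- microhyperbolicity at ξ 0
  obtain ⟨l, hl, hml⟩ := hMH (ξ 0)
  have hinner0 : ⟪l, gradient A0 (ξ 0)⟫ ≥ ε₀ - (ϵ + ε) := by
    have := hA0near 0
    have h1 := abs_nonneg (A0 (ξ 0) - lam)
    linarith [hml, this]
  -- derivative of the observable
  have hφd : ∀ t : ℝ, HasDerivAt (fun s => ⟪l, x s⟫)
      (⟪l, gradient (fun ξ' => A0 ξ' + V (x t) ξ') (ξ t)⟫) t := by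
    intro t
    have h := (hasDerivAt_const t l).inner ℝ (hx t)
    simpa using h
  have hφlower : ∀ t : ℝ, ‖ξ t - ξ 0‖ ≤ r →
      κ ≤ ⟪l, gradient (fun ξ' => A0 ξ' + V (x t) ξ') (ξ t)⟫ := by
    intro t ht
    rw [hgradsum, inner_add_right]
    set w := gradient A0 (ξ t) - gradient A0 (ξ 0) with hw
    have h1 : |⟪l, w⟫| ≤ ‖l‖ * ‖w‖ := abs_real_inner_le_norm _ _
    have h2 : ‖w‖ ≤ L * ‖ξ t - ξ 0‖ := hLip _ _ (hshell t) (hshell 0)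
    have h2' : L * ‖ξ t - ξ 0‖ ≤ L * r := mul_le_mul_of_nonneg_left ht (by linarith)
    have h3 : ‖l‖ * ‖w‖ ≤ ‖w‖ := mul_le_of_le_one_left (norm_nonneg _) hl
    have h4 : ⟪l, gradient A0 (ξ t)⟫ = ⟪l, gradient A0 (ξ 0)⟫ + ⟪l, w⟫ := by
      rw [hw, inner_sub_right]; ring
    have h5 : |⟪l, gradient (fun ξ' => V (x t) ξ') (ξ t)⟫|
        ≤ ‖l‖ * ‖gradient (fun ξ' => V (x t) ξ') (ξ t)‖ := abs_real_inner_le_norm _ _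
    have h6 := hVsξ (x t) (ξ t)
    have h7 : ‖l‖ * ‖gradient (fun ξ' => V (x t) ξ') (ξ t)‖
        ≤ ‖gradient (fun ξ' => V (x t) ξ') (ξ t)‖ :=
      mul_le_of_le_one_left (norm_nonneg _) hl
    have hLr : L * r ≤ ε₀ / 8 := by
      have hr8 : r ≤ ε₀ / (8 * L) := min_le_right _ _
      have hL0 : (0:ℝ) < L := by linarith
      calc L * r ≤ L * (ε₀ / (8 * L)) := mul_le_mul_of_nonneg_left hr8 hL0.le
        _ = ε₀ / 8 := by field_simp
    have h8 := neg_abs_le ⟪l, w⟫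
    have h9 := neg_abs_le ⟪l, gradient (fun ξ' => V (x t) ξ') (ξ t)⟫
    rw [hκdef]
    linarith [hinner0]
  -- decay of the momentum derivative
  have hdecay : ∀ t : ℝ, ‖gradient (fun x' => V x' (ξ t)) (x t)‖
      ≤ min ε (C * (1 + ‖x t‖) ^ (-(1 + δ))) := by
    intro t
    refine le_min (hVsx _ _) ?_
    have e0 : ‖gradient (fun x' => V x' (ξ t)) (x t)‖
        = ‖iteratedFDeriv ℝ 1 (fun x' => iteratedFDeriv ℝ 0 (fun ξ' => V x' ξ') (ξ t)) (x t)‖ := by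
      have h1 : (fun x' => iteratedFDeriv ℝ 0 (fun ξ' => V x' ξ') (ξ t))
          = (⇑(continuousMultilinearCurryFin0 ℝ (EuclideanSpace ℝ (Fin d)) ℝ).symm
              ∘ (fun x' => V x' (ξ t))) := by
        funext x'
        rw [iteratedFDeriv_zero_eq_comp]
        rfl
      rw [h1, LinearIsometryEquiv.norm_iteratedFDeriv_comp_left]
      calc ‖gradient (fun x' => V x' (ξ t)) (x t)‖
          = ‖fderiv ℝ (fun x' => V x' (ξ t)) (x t)‖ := by
            unfold gradient; rw [LinearIsometryEquiv.norm_map]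
        _ = ‖iteratedFDeriv ℝ 0 (fderiv ℝ (fun x' => V x' (ξ t))) (x t)‖ :=
            (norm_iteratedFDeriv_zero).symm
        _ = ‖iteratedFDeriv ℝ 1 (fun x' => V x' (ξ t)) (x t)‖ := norm_iteratedFDeriv_fderiv
    rw [e0]
    refine (hVb 0 1 (x t) (ξ t)).trans ?_
    rw [show (-δ - ((1:ℕ):ℝ)) = -(1 + δ) by push_cast; ring]
    have hbase : (1 + ‖ξ t‖) ^ m ≤ (1 + ρ) ^ m :=
      Real.rpow_le_rpow (by positivity) (by linarith [hshell t]) hm.le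
    have h2 : cV 0 1 * (1 + ‖ξ t‖) ^ m ≤ C := by
      rw [hCdef]
      have h3 := mul_le_mul (le_max_right 0 (cV 0 1)) hbase
        (Real.rpow_nonneg (by positivity) m) (le_max_left 0 _)
      linarith
    exact mul_le_mul_of_nonneg_right h2 (Real.rpow_nonneg (by positivity) _)
  -- main estimate on intervals where ξ stays near ξ 0
  have est : ∀ a b : ℝ, a ≤ b → (∀ s ∈ Icc a b, ‖ξ s - ξ 0‖ ≤ r) →
      ‖ξ b - ξ a‖ ≤ r / 2 := by
    intro a b hab hsmall
    obtain ⟨G, hG, hGb⟩ := exists_G (p := δ / 2) (by positivity)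
    set M₀ : ℝ := ε ^ θ * C ^ (1 - θ) / κ with hM₀
    have hM₀pos : 0 < M₀ :=
      div_pos (mul_pos (Real.rpow_pos_of_pos hεpos _) hCθpos) hκpos
    have hBd : ∀ s : ℝ, HasDerivAt (fun u => M₀ * G ⟪l, x u⟫ - M₀ * G ⟪l, x a⟫)
        (M₀ * ((1 + |⟪l, x s⟫|) ^ (-(1 + δ / 2))
          * ⟪l, gradient (fun ξ' => A0 ξ' + V (x s) ξ') (ξ s)⟫)) s := by
      intro s
      exact (((hG _).comp s (hφd s)).const_mul M₀).sub_const _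
    have hbound : ∀ s ∈ Ico a b, ‖-(gradient (fun x' => V x' (ξ s)) (x s))‖
        ≤ M₀ * ((1 + |⟪l, x s⟫|) ^ (-(1 + δ / 2))
          * ⟪l, gradient (fun ξ' => A0 ξ' + V (x s) ξ') (ξ s)⟫) := by
      intro s hs
      have hsI : s ∈ Icc a b := ⟨hs.1, hs.2.le⟩
      have hκs := hφlower s (hsmall s hsI)
      rw [norm_neg]
      have h1 := hdecay s
      have h2 : min ε (C * (1 + ‖x s‖) ^ (-(1 + δ)))
          ≤ ε ^ θ * (C * (1 + ‖x s‖) ^ (-(1 + δ))) ^ (1 - θ) :=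
        min_le_rpow_interp hεpos.le (by positivity) hθpos.le hθ1.le
      have h3 : (C * (1 + ‖x s‖) ^ (-(1 + δ))) ^ (1 - θ)
          = C ^ (1 - θ) * (1 + ‖x s‖) ^ (-(1 + δ / 2)) := by
        rw [Real.mul_rpow (by linarith) (Real.rpow_nonneg (by positivity) _),
          ← Real.rpow_mul (by positivity : (0:ℝ) ≤ 1 + ‖x s‖),
          show (-(1 + δ) * (1 - θ)) = -(1 + δ / 2) by linear_combination -hexp]
      have h4 : (1 + ‖x s‖) ^ (-(1 + δ / 2)) ≤ (1 + |⟪l, x s⟫|) ^ (-(1 + δ / 2)) := by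
        refine Real.rpow_le_rpow_of_nonpos (by positivity) ?_ (by linarith)
        have h5 : |⟪l, x s⟫| ≤ ‖l‖ * ‖x s‖ := abs_real_inner_le_norm _ _
        have h6 : ‖l‖ * ‖x s‖ ≤ ‖x s‖ := mul_le_of_le_one_left (norm_nonneg _) hl
        linarith
      have h7 : ε ^ θ * C ^ (1 - θ) * (1 + |⟪l, x s⟫|) ^ (-(1 + δ / 2))
          ≤ M₀ * ((1 + |⟪l, x s⟫|) ^ (-(1 + δ / 2))
            * ⟪l, gradient (fun ξ' => A0 ξ' + V (x s) ξ') (ξ s)⟫) := by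
        have hpw : (0:ℝ) < (1 + |⟪l, x s⟫|) ^ (-(1 + δ / 2)) :=
          Real.rpow_pos_of_pos (by positivity) _
        have e1 : ε ^ θ * C ^ (1 - θ) = M₀ * κ := by
          rw [hM₀]; field_simp
        rw [e1, mul_assoc]
        refine mul_le_mul_of_nonneg_left ?_ hM₀pos.le
        calc κ * (1 + |⟪l, x s⟫|) ^ (-(1 + δ / 2))
            = (1 + |⟪l, x s⟫|) ^ (-(1 + δ / 2)) * κ := mul_comm _ _
          _ ≤ (1 + |⟪l, x s⟫|) ^ (-(1 + δ / 2))
              * ⟪l, gradient (fun ξ' => A0 ξ' + V (x s) ξ') (ξ s)⟫ :=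
            mul_le_mul_of_nonneg_left hκs hpw.le
      calc ‖gradient (fun x' => V x' (ξ s)) (x s)‖
          ≤ min ε (C * (1 + ‖x s‖) ^ (-(1 + δ))) := h1
        _ ≤ ε ^ θ * (C * (1 + ‖x s‖) ^ (-(1 + δ))) ^ (1 - θ) := h2
        _ = ε ^ θ * (C ^ (1 - θ) * (1 + ‖x s‖) ^ (-(1 + δ / 2))) := by rw [h3]
        _ ≤ ε ^ θ * (C ^ (1 - θ) * (1 + |⟪l, x s⟫|) ^ (-(1 + δ / 2))) := by
            refine mul_le_mul_of_nonneg_left ?_ (Real.rpow_nonneg hεpos.le _)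
            exact mul_le_mul_of_nonneg_left h4 hCθpos.le
        _ = ε ^ θ * C ^ (1 - θ) * (1 + |⟪l, x s⟫|) ^ (-(1 + δ / 2)) := by ring
        _ ≤ _ := h7
    have hcomp := image_norm_le_of_norm_deriv_right_le_deriv_boundary
      (f := fun s => ξ s - ξ a)
      (f' := fun s => -(gradient (fun x' => V x' (ξ s)) (x s)))
      (a := a) (b := b)
      (((hξcont.sub continuous_const)).continuousOn)
      (fun s _ => ((hξ' s).sub_const _).hasDerivWithinAt)
      (B := fun u => M₀ * G ⟪l, x u⟫ - M₀ * G ⟪l, x a⟫)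
      (B' := fun s => M₀ * ((1 + |⟪l, x s⟫|) ^ (-(1 + δ / 2))
        * ⟪l, gradient (fun ξ' => A0 ξ' + V (x s) ξ') (ξ s)⟫))
      (by simp) hBd hbound
    have hb' := hcomp (right_mem_Icc.2 hab)
    have hGbd : M₀ * G ⟪l, x b⟫ - M₀ * G ⟪l, x a⟫ ≤ M₀ * (2 / (δ / 2)) := by
      have := hGb ⟪l, x a⟫ ⟪l, x b⟫
      nlinarith
    have hfinal : M₀ * (2 / (δ / 2)) ≤ r / 2 := by
      have hX : (0:ℝ) ≤ r * κ * (δ / 2) / (4 * C ^ (1 - θ)) := by positivity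
      have hεθ : ε ^ θ ≤ r * κ * (δ / 2) / (4 * C ^ (1 - θ)) := by
        have h1 : ε ^ θ ≤ Eε ^ θ := Real.rpow_le_rpow hεpos.le hεE hθpos.le
        have h2 : Eε ^ θ = r * κ * (δ / 2) / (4 * C ^ (1 - θ)) := by
          rw [hEdef, one_div, Real.rpow_inv_rpow hX hθpos.ne']
        linarith
      have h3 : M₀ * (2 / (δ / 2)) = ε ^ θ * (C ^ (1 - θ) * (2 / (δ / 2)) / κ) := by
        rw [hM₀]; field_simp
      have h4 : (r * κ * (δ / 2) / (4 * C ^ (1 - θ)))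
          * (C ^ (1 - θ) * (2 / (δ / 2)) / κ) = r / 2 := by
        field_simp
        ring
      have h5 : (0:ℝ) ≤ C ^ (1 - θ) * (2 / (δ / 2)) / κ := by positivity
      rw [h3, ← h4]
      exact mul_le_mul_of_nonneg_right hεθ h5
    calc ‖ξ b - ξ a‖ ≤ M₀ * G ⟪l, x b⟫ - M₀ * G ⟪l, x a⟫ := hb'
      _ ≤ M₀ * (2 / (δ / 2)) := hGbd
      _ ≤ r / 2 := hfinal
  -- global smallness of momentum variation
  have hr2 : ∀ t : ℝ, ‖ξ t - ξ 0‖ ≤ r / 2 := by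
    have hgc : Continuous (fun s => ‖ξ s - ξ 0‖) := (hξcont.sub continuous_const).norm
    intro t
    rcases le_total 0 t with ht | ht
    · have hIcc : ∀ s ∈ Icc 0 t, ‖ξ s - ξ 0‖ ≤ r := by
        by_contra hcon
        push_neg at hcon
        obtain ⟨s₀, hs₀, hs₀r⟩ := hcon
        set Bs : Set ℝ := Icc 0 t ∩ {s | 3 * r / 4 ≤ ‖ξ s - ξ 0‖} with hBs
        have hne : Bs.Nonempty := ⟨s₀, hs₀, by simp only [mem_setOf_eq]; linarith⟩
        have hcl : IsClosed Bs := isClosed_Icc.inter (isClosed_le continuous_const hgc)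
        have hbdd : BddBelow Bs := ⟨0, fun s hs => hs.1.1⟩
        have hTmem : sInf Bs ∈ Bs := hcl.csInf_mem hne hbdd
        set T := sInf Bs with hT
        have hT34 : 3 * r / 4 ≤ ‖ξ T - ξ 0‖ := hTmem.2
        have hT0 : 0 < T := by
          rcases eq_or_lt_of_le hTmem.1.1 with h | h
          · exfalso
            rw [← h, sub_self, norm_zero] at hT34
            linarith
          · exact h
        have hlt : ∀ s ∈ Ico 0 T, ‖ξ s - ξ 0‖ < 3 * r / 4 := by
          intro s hs
          by_contra hcon2
          push_neg at hcon2
          have hsB : s ∈ Bs := ⟨⟨hs.1, hs.2.le.trans hTmem.1.2⟩, hcon2⟩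
          have := csInf_le hbdd hsB
          linarith [hs.2]
        have hTle : ‖ξ T - ξ 0‖ ≤ 3 * r / 4 := by
          have htd : Filter.Tendsto (fun s => ‖ξ s - ξ 0‖) (nhdsWithin T (Iio T))
              (nhds ‖ξ T - ξ 0‖) := (hgc.continuousAt).continuousWithinAt.tendsto
          refine le_of_tendsto htd ?_
          filter_upwards [Ioo_mem_nhdsLT_of_mem (⟨hT0, le_refl T⟩ : T ∈ Ioc 0 T)] with s hs
          exact (hlt s ⟨hs.1.le, hs.2⟩).le
        have hall : ∀ s ∈ Icc 0 T, ‖ξ s - ξ 0‖ ≤ r := by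
          intro s hs
          rcases eq_or_lt_of_le hs.2 with h | h
          · rw [h]; linarith
          · linarith [hlt s ⟨hs.1, h⟩]
        have := est 0 T hTmem.1.1 hall
        linarith
      exact est 0 t ht hIcc
    · have hIcc : ∀ s ∈ Icc t 0, ‖ξ s - ξ 0‖ ≤ r := by
        by_contra hcon
        push_neg at hcon
        obtain ⟨s₀, hs₀, hs₀r⟩ := hcon
        set Bs : Set ℝ := Icc t 0 ∩ {s | 3 * r / 4 ≤ ‖ξ s - ξ 0‖} with hBs
        have hne : Bs.Nonempty := ⟨s₀, hs₀, by simp only [mem_setOf_eq]; linarith⟩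
        have hcl : IsClosed Bs := isClosed_Icc.inter (isClosed_le continuous_const hgc)
        have hbdd : BddAbove Bs := ⟨0, fun s hs => hs.1.2⟩
        have hTmem : sSup Bs ∈ Bs := hcl.csSup_mem hne hbdd
        set T := sSup Bs with hT
        have hT34 : 3 * r / 4 ≤ ‖ξ T - ξ 0‖ := hTmem.2
        have hT0 : T < 0 := by
          rcases eq_or_lt_of_le hTmem.1.2 with h | h
          · exfalso
            rw [h, sub_self, norm_zero] at hT34
            linarith
          · exact h
        have hlt : ∀ s ∈ Ioc T 0, ‖ξ s - ξ 0‖ < 3 * r / 4 := by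
          intro s hs
          by_contra hcon2
          push_neg at hcon2
          have hsB : s ∈ Bs := ⟨⟨hTmem.1.1.trans hs.1.le, hs.2⟩, hcon2⟩
          have := le_csSup hbdd hsB
          linarith [hs.1]
        have hTle : ‖ξ T - ξ 0‖ ≤ 3 * r / 4 := by
          have htd : Filter.Tendsto (fun s => ‖ξ s - ξ 0‖) (nhdsWithin T (Ioi T))
              (nhds ‖ξ T - ξ 0‖) := (hgc.continuousAt).continuousWithinAt.tendsto
          refine le_of_tendsto htd ?_
          filter_upwards [Ioo_mem_nhdsGT_of_mem (⟨le_refl T, hT0⟩ : T ∈ Ico T 0)] with s hs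
          exact (hlt s ⟨hs.1, hs.2.le⟩).le
        have hall : ∀ s ∈ Icc T 0, ‖ξ s - ξ 0‖ ≤ r := by
          intro s hs
          rcases eq_or_lt_of_le hs.1 with h | h
          · rw [← h]; linarith
          · linarith [hlt s ⟨h, hs.2⟩]
        have h2 := est T 0 hTmem.1.2 hall
        rw [norm_sub_rev] at h2
        linarith
      have h := est t 0 ht hIcc
      rwa [norm_sub_rev] at h
  -- monotonicity of the observable
  have hmono : ∀ a b : ℝ, a ≤ b → κ * (b - a) ≤ ⟪l, x b⟫ - ⟪l, x a⟫ := by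
    have hψd : ∀ s : ℝ, HasDerivAt (fun u => ⟪l, x u⟫ - κ * u)
        (⟪l, gradient (fun ξ' => A0 ξ' + V (x s) ξ') (ξ s)⟫ - κ * 1) s := by
      intro s
      exact (hφd s).sub ((hasDerivAt_id s).const_mul κ)
    have hψdiff : Differentiable ℝ (fun u => ⟪l, x u⟫ - κ * u) :=
      fun s => (hψd s).differentiableAt
    have hψderiv : ∀ s : ℝ, 0 ≤ deriv (fun u => ⟪l, x u⟫ - κ * u) s := by
      intro s
      rw [(hψd s).deriv]
      have h := hφlower s ((hr2 s).trans (by linarith))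
      linarith
    intro a b hab
    have := monotone_of_deriv_nonneg hψdiff hψderiv hab
    simp only at this
    linarith
  intro t
  constructor
  · have h1 := hr2 t
    have h2 : r ≤ ε' := min_le_left _ _
    linarith
  · rcases le_total 0 t with ht | ht
    · have h := hmono 0 t ht
      have h2 : ⟪l, x t⟫ - ⟪l, x 0⟫ = ⟪l, x t - x 0⟫ := (inner_sub_right _ _ _).symm
      have h3 : ⟪l, x t - x 0⟫ ≤ ‖l‖ * ‖x t - x 0‖ := real_inner_le_norm _ _
      have h4 : ‖l‖ * ‖x t - x 0‖ ≤ ‖x t - x 0‖ :=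
        mul_le_of_le_one_left (norm_nonneg _) hl
      rw [abs_of_nonneg ht]
      linarith
    · have h := hmono t 0 ht
      have h2 : ⟪l, x 0⟫ - ⟪l, x t⟫ = ⟪l, x 0 - x t⟫ := (inner_sub_right _ _ _).symm
      have h3 : ⟪l, x 0 - x t⟫ ≤ ‖l‖ * ‖x 0 - x t‖ := real_inner_le_norm _ _
      have h4 : ‖l‖ * ‖x 0 - x t‖ ≤ ‖x 0 - x t‖ :=
        mul_le_of_le_one_left (norm_nonneg _) hl
      rw [abs_of_nonpos ht, ← norm_neg (x t - x 0)]
      simp only [neg_sub]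
      linarith
end

section
/- In the scalar symbol setting: there exist ε > 0, ε′ > 0, ϵ > 0 and ε₂ > 0 (depending only on d, m, δ, λ, ε₀, c₀, C₀ and the constants c_{αβ}) such that if V satisfies |∂_ξ^α ∂_x^β V(x,ξ)| ≤ ε for all |α| + |β| ≤ 1, then the following holds. Let (x(t), ξ(t)), t ∈ [0,T], be a Hamiltonian trajectory of H = A⁰ + V on energy level τ with |τ − λ| ≤ ϵ, let ℓ ∈ ℝ^d satisfy |ℓ| ≤ 1 and ⟨ℓ, ∇A⁰(ξ(0))⟩ + |A⁰(ξ(0)) − λ| ≥ ε₀, and assume |ξ(t) − ξ(0)| ≤ ε′ for all t ∈ [0,T]. Then ⟨ℓ, x(t) − x(0)⟩ ≥ ε₂ t for all t ∈ [0,T]. -/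
open scoped RealInnerProductSpace

section Aux

variable {F : Type*} [NormedAddCommGroup F] [InnerProductSpace ℝ F] [CompleteSpace F]

lemma aux_grad_sub_norm (f : F → ℝ) (a b : F) :
    ‖gradient f a - gradient f b‖ = ‖fderiv ℝ f a - fderiv ℝ f b‖ := by
  rw [gradient, gradient, ← map_sub, LinearIsometryEquiv.norm_map]

lemma aux_grad_add (f g : F → ℝ) (x : F) (hf : DifferentiableAt ℝ f x)
    (hg : DifferentiableAt ℝ g x) :
    gradient (fun y => f y + g y) x = gradient f x + gradient g x := by
  rw [gradient, gradient, gradient, fderiv_fun_add hf hg, map_add]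

lemma aux_norm_fderiv_fderiv (f : F → ℝ) (ζ : F) :
    ‖fderiv ℝ (fderiv ℝ f) ζ‖ = ‖iteratedFDeriv ℝ 2 f ζ‖ := by
  rw [← norm_iteratedFDeriv_fderiv, ← norm_iteratedFDeriv_fderiv, norm_iteratedFDeriv_zero]

end Aux

/-- Linear escape along a microhyperbolicity direction: if along a Hamiltonian
trajectory of `H = A⁰ + V` on an energy level near `λ` the momentum stays
`ε'`-close to its initial value, and `ℓ` is a microhyperbolicity direction for
`A⁰` at `ξ(0)`, then `⟨ℓ, x(t) - x(0)⟩ ≥ ε₂ t`.  The thresholds `ε, ε', ϵ, ε₂`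
depend only on `d, m, δ, λ, ε₀, c₀, C₀` and the constants `cA, cV`. -/
theorem linear_escape_along_microhyperbolic_direction
    (d : ℕ) (hd : 1 ≤ d) (m δ lam ε₀ c₀ C₀ : ℝ)
    (hm : 0 < m) (hδ : 0 < δ) (hε₀ : 0 < ε₀) (hc₀ : 0 < c₀)
    (cA : ℕ → ℝ) (cV : ℕ → ℕ → ℝ) :
    ∃ ε > (0 : ℝ), ∃ ε' > (0 : ℝ), ∃ ϵ > (0 : ℝ), ∃ ε₂ > (0 : ℝ),
      ∀ (A0 : EuclideanSpace ℝ (Fin d) → ℝ)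
        (V : EuclideanSpace ℝ (Fin d) → EuclideanSpace ℝ (Fin d) → ℝ),
        -- `A⁰` is smooth with polynomially bounded derivatives
        ContDiff ℝ (⊤ : ℕ∞) A0 →
        (∀ (n : ℕ) (ξ : EuclideanSpace ℝ (Fin d)),
            ‖iteratedFDeriv ℝ n A0 ξ‖ ≤ cA n * (1 + ‖ξ‖) ^ m) →
        -- ellipticity
        (∀ ξ : EuclideanSpace ℝ (Fin d), A0 ξ ≥ c₀ * ‖ξ‖ ^ m - C₀) →
        -- ξ-microhyperbolicity of `A⁰` at energy level `λ`
        (∀ ξ : EuclideanSpace ℝ (Fin d), ∃ l : EuclideanSpace ℝ (Fin d),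
            ‖l‖ ≤ 1 ∧ ⟪l, gradient A0 ξ⟫ + |A0 ξ - lam| ≥ ε₀) →
        -- `V` is smooth with the symbol-type decay bounds
        ContDiff ℝ (⊤ : ℕ∞)
          (fun p : EuclideanSpace ℝ (Fin d) × EuclideanSpace ℝ (Fin d) => V p.1 p.2) →
        (∀ (k n : ℕ) (x ξ : EuclideanSpace ℝ (Fin d)),
            ‖iteratedFDeriv ℝ n
                (fun x' => iteratedFDeriv ℝ k (fun ξ' => V x' ξ') ξ) x‖
              ≤ cV k n * (1 + ‖ξ‖) ^ m * (1 + ‖x‖) ^ (-δ - (n : ℝ))) →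
        -- smallness of `V` up to first order
        (∀ x ξ : EuclideanSpace ℝ (Fin d), |V x ξ| ≤ ε) →
        (∀ x ξ : EuclideanSpace ℝ (Fin d), ‖gradient (fun x' => V x' ξ) x‖ ≤ ε) →
        (∀ x ξ : EuclideanSpace ℝ (Fin d), ‖gradient (fun ξ' => V x ξ') ξ‖ ≤ ε) →
        -- Hamiltonian trajectory on `[0, T]` on energy level `τ`, `|τ - λ| ≤ ϵ`
        ∀ (T : ℝ) (x ξ : ℝ → EuclideanSpace ℝ (Fin d)) (τ : ℝ)
          (l : EuclideanSpace ℝ (Fin d)),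
          (∀ t ∈ Set.Icc (0 : ℝ) T,
            HasDerivAt x (gradient (fun ξ' => A0 ξ' + V (x t) ξ') (ξ t)) t) →
          (∀ t ∈ Set.Icc (0 : ℝ) T,
            HasDerivAt ξ (-gradient (fun x' => A0 (ξ t) + V x' (ξ t)) (x t)) t) →
          (∀ t ∈ Set.Icc (0 : ℝ) T, A0 (ξ t) + V (x t) (ξ t) = τ) →
          |τ - lam| ≤ ϵ →
          -- `l` is a microhyperbolicity direction at `ξ 0`
          ‖l‖ ≤ 1 →
          ⟪l, gradient A0 (ξ 0)⟫ + |A0 (ξ 0) - lam| ≥ ε₀ →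
          -- the momentum stays `ε'`-close to its initial value
          (∀ t ∈ Set.Icc (0 : ℝ) T, ‖ξ t - ξ 0‖ ≤ ε') →
          ∀ t ∈ Set.Icc (0 : ℝ) T, ⟪l, x t - x 0⟫ ≥ ε₂ * t := by
  classical
  set B : ℝ := |lam| + ε₀ + |C₀| with hBdef
  have hBpos : 0 < B := by positivity
  set R : ℝ := (B / c₀) ^ (1 / m) with hRdef
  have hR0 : 0 ≤ R := Real.rpow_nonneg (by positivity) _
  set K : ℝ := max (cA 2) 1 * (2 + R) ^ m with hKdef
  have hKpos : 0 < K := by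
    have h1 : (0 : ℝ) < (2 + R) ^ m := Real.rpow_pos_of_pos (by linarith) m
    have h2 : (0 : ℝ) < max (cA 2) 1 := lt_of_lt_of_le one_pos (le_max_right _ _)
    exact mul_pos h2 h1
  set ε' : ℝ := min 1 (ε₀ / (8 * K)) with hε'def
  have hε'pos : 0 < ε' := lt_min one_pos (by positivity)
  refine ⟨ε₀ / 16, by positivity, ε', hε'pos, ε₀ / 16, by positivity, ε₀ / 2, by positivity, ?_⟩
  intro A0 V hA hAbd hell _hmh hVsm _hVbd hVsmall _hVgx hVgξ T x ξ τ l hx _hξ hH hτ hl hmicro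
    hclose t ht
  have h0T : (0 : ℝ) ≤ T := le_trans ht.1 ht.2
  have h0 : (0 : ℝ) ∈ Set.Icc (0 : ℝ) T := ⟨le_refl 0, h0T⟩
  -- the energy at time 0 is close to `lam`
  have hE0 := hH 0 h0
  have hA0lam : |A0 (ξ 0) - lam| ≤ ε₀ / 8 := by
    have h1 := hVsmall (x 0) (ξ 0)
    have h2 : A0 (ξ 0) - lam = (τ - lam) - V (x 0) (ξ 0) := by linarith
    calc |A0 (ξ 0) - lam| = |(τ - lam) - V (x 0) (ξ 0)| := by rw [h2]
      _ ≤ |τ - lam| + |V (x 0) (ξ 0)| := abs_sub _ _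
      _ ≤ ε₀ / 16 + ε₀ / 16 := add_le_add hτ h1
      _ = ε₀ / 8 := by ring
  -- the initial momentum is bounded by `R`
  have hξ0R : ‖ξ 0‖ ≤ R := by
    have h1 : c₀ * ‖ξ 0‖ ^ m - C₀ ≤ A0 (ξ 0) := hell _
    have h2 : A0 (ξ 0) ≤ lam + ε₀ / 8 := by
      have := (abs_le.1 hA0lam).2; linarith
    have h3 : c₀ * ‖ξ 0‖ ^ m ≤ B := by
      have := le_abs_self lam
      have := le_abs_self C₀
      rw [hBdef]; linarith
    have h4 : ‖ξ 0‖ ^ m ≤ B / c₀ := (le_div_iff₀' hc₀).mpr h3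
    calc ‖ξ 0‖ = (‖ξ 0‖ ^ m) ^ (1 / m) := by
          rw [← Real.rpow_mul (norm_nonneg _), mul_one_div_cancel hm.ne', Real.rpow_one]
      _ ≤ (B / c₀) ^ (1 / m) :=
          Real.rpow_le_rpow (Real.rpow_nonneg (norm_nonneg _) _) h4 (by positivity)
      _ = R := rfl
  -- the second derivative of `A0` is bounded by `K` on the relevant ball
  have hfd : Differentiable ℝ (fderiv ℝ A0) := (hA.fderiv_right (m := 1) (WithTop.coe_le_coe.mpr le_top)).differentiable one_ne_zero
  have hbound : ∀ ζ ∈ Metric.closedBall (ξ 0) ε', ‖fderiv ℝ (fderiv ℝ A0) ζ‖ ≤ K := by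
    intro ζ hζ
    have hζd : ‖ζ - ξ 0‖ ≤ ε' := mem_closedBall_iff_norm.1 hζ
    have hε'1 : ε' ≤ 1 := min_le_left _ _
    have hζn : ‖ζ‖ ≤ R + 1 := by
      have := norm_sub_norm_le ζ (ξ 0)
      linarith
    rw [aux_norm_fderiv_fderiv]
    calc ‖iteratedFDeriv ℝ 2 A0 ζ‖ ≤ cA 2 * (1 + ‖ζ‖) ^ m := hAbd 2 ζ
      _ ≤ max (cA 2) 1 * (2 + R) ^ m := by
          apply mul_le_mul (le_max_left _ _)
            (Real.rpow_le_rpow (by positivity) (by linarith) hm.le)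
            (Real.rpow_nonneg (by positivity) _)
            (le_trans zero_le_one (le_max_right _ _))
      _ = K := rfl
  -- along the trajectory, `⟪l, ∇A0(ξ s)⟫` stays bounded below
  have hgrad : ∀ s ∈ Set.Icc (0 : ℝ) T, ε₀ - ε₀ / 4 ≤ ⟪l, gradient A0 (ξ s)⟫ := by
    intro s hs
    have hcb : ξ s ∈ Metric.closedBall (ξ 0) ε' := mem_closedBall_iff_norm.2 (hclose s hs)
    have hcb0 : ξ 0 ∈ Metric.closedBall (ξ 0) ε' := Metric.mem_closedBall_self hε'pos.le
    have hdiff : ‖gradient A0 (ξ s) - gradient A0 (ξ 0)‖ ≤ ε₀ / 8 := by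
      rw [aux_grad_sub_norm]
      calc ‖fderiv ℝ A0 (ξ s) - fderiv ℝ A0 (ξ 0)‖ ≤ K * ‖ξ s - ξ 0‖ :=
            (convex_closedBall _ _).norm_image_sub_le_of_norm_fderiv_le (fun ζ _ => hfd ζ) hbound
              hcb0 hcb
        _ ≤ K * ε' := mul_le_mul_of_nonneg_left (hclose s hs) hKpos.le
        _ ≤ K * (ε₀ / (8 * K)) := mul_le_mul_of_nonneg_left (min_le_right _ _) hKpos.le
        _ = ε₀ / 8 := by field_simp
    have h1 : ε₀ - ε₀ / 8 ≤ ⟪l, gradient A0 (ξ 0)⟫ := by linarith [hmicro, hA0lam]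
    have h2 : |⟪l, gradient A0 (ξ s) - gradient A0 (ξ 0)⟫| ≤ ε₀ / 8 := by
      calc |⟪l, gradient A0 (ξ s) - gradient A0 (ξ 0)⟫|
          ≤ ‖l‖ * ‖gradient A0 (ξ s) - gradient A0 (ξ 0)‖ := abs_real_inner_le_norm _ _
        _ ≤ 1 * (ε₀ / 8) := mul_le_mul hl hdiff (norm_nonneg _) zero_le_one
        _ = ε₀ / 8 := one_mul _
    have h3 : ⟪l, gradient A0 (ξ s) - gradient A0 (ξ 0)⟫
        = ⟪l, gradient A0 (ξ s)⟫ - ⟪l, gradient A0 (ξ 0)⟫ := inner_sub_right _ _ _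
    have := (abs_le.1 h2).1
    linarith
  -- differentiability of `V` in the second variable
  have hVdiff : ∀ x0 : EuclideanSpace ℝ (Fin d), Differentiable ℝ (fun ξ' => V x0 ξ') := by
    intro x0
    have : ContDiff ℝ (⊤ : ℕ∞) (fun ξ' : EuclideanSpace ℝ (Fin d) => V x0 ξ') :=
      hVsm.comp (contDiff_const.prodMk contDiff_id)
    exact this.differentiable (by simp)
  -- derivative of the auxiliary function
  have hxderiv : ∀ s ∈ Set.Icc (0 : ℝ) T,
      HasDerivAt (fun u => ⟪l, x u⟫ - ε₀ / 2 * u)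
        (⟪l, gradient (fun ξ' => A0 ξ' + V (x s) ξ') (ξ s)⟫ - ε₀ / 2) s := by
    intro s hs
    have h1 := (innerSL ℝ l).hasFDerivAt.comp_hasDerivAt s (hx s hs)
    have h2 : HasDerivAt (fun u : ℝ => ε₀ / 2 * u) (ε₀ / 2) s := by
      simpa using (hasDerivAt_id s).const_mul (ε₀ / 2)
    exact h1.sub h2
  -- the derivative is nonnegative
  have hderiv_nonneg : ∀ s ∈ Set.Icc (0 : ℝ) T,
      0 ≤ ⟪l, gradient (fun ξ' => A0 ξ' + V (x s) ξ') (ξ s)⟫ - ε₀ / 2 := by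
    intro s hs
    have hsplit : gradient (fun ξ' => A0 ξ' + V (x s) ξ') (ξ s)
        = gradient A0 (ξ s) + gradient (fun ξ' => V (x s) ξ') (ξ s) :=
      aux_grad_add _ _ _ ((hA.differentiable (by simp)) (ξ s)) ((hVdiff (x s)) (ξ s))
    rw [hsplit, inner_add_right]
    have h1 := hgrad s hs
    have h2 : |⟪l, gradient (fun ξ' => V (x s) ξ') (ξ s)⟫| ≤ ε₀ / 16 := by
      calc |⟪l, gradient (fun ξ' => V (x s) ξ') (ξ s)⟫|
          ≤ ‖l‖ * ‖gradient (fun ξ' => V (x s) ξ') (ξ s)‖ := abs_real_inner_le_norm _ _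
        _ ≤ 1 * (ε₀ / 16) := mul_le_mul hl (hVgξ (x s) (ξ s)) (norm_nonneg _) zero_le_one
        _ = ε₀ / 16 := one_mul _
    have := (abs_le.1 h2).1
    linarith
  -- monotonicity of the auxiliary function
  have hmono : MonotoneOn (fun u => ⟪l, x u⟫ - ε₀ / 2 * u) (Set.Icc (0 : ℝ) T) := by
    apply monotoneOn_of_deriv_nonneg (convex_Icc 0 T)
    · intro s hs
      exact (hxderiv s hs).continuousAt.continuousWithinAt
    · intro s hs
      rw [interior_Icc] at hs
      exact (hxderiv s (Set.Ioo_subset_Icc_self hs)).differentiableAt.differentiableWithinAt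
    · intro s hs
      rw [interior_Icc] at hs
      rw [(hxderiv s (Set.Ioo_subset_Icc_self hs)).deriv]
      exact hderiv_nonneg s (Set.Ioo_subset_Icc_self hs)
  have hkey := hmono h0 ht ht.1
  simp only [mul_zero, sub_zero] at hkey
  have hsub : ⟪l, x t - x 0⟫ = ⟪l, x t⟫ - ⟪l, x 0⟫ := inner_sub_right _ _ _
  rw [ge_iff_le, hsub]
  linarith
end

section
/- Let d ≥ 1, δ > 0, C > 0, ε₁ > 0, ε₂ > 0, R ≥ 0 and T > 0. Let x : [0,T] → ℝ^d be continuous with |x(t)| ≥ ε₁R + ε₂t for all t ∈ [0,T], and let ξ : [0,T] → ℝ^d be continuously differentiable with |ξ′(t)| ≤ C(1 + |x(t)|)^{−1−δ} for all t ∈ [0,T]. Then |ξ(T) − ξ(0)| ≤ C ε₂⁻¹ δ⁻¹ (1 + ε₁R)^{−δ}. -/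
open intervalIntegral MeasureTheory

/-- Along an outgoing trajectory (`‖x(t)‖ ≥ ε₁R + ε₂t`), a momentum variable
whose speed decays like `(1 + ‖x‖)^{-1-δ}` has total variation at most
`C ε₂⁻¹ δ⁻¹ (1 + ε₁ R)^{-δ}`. -/
theorem momentum_variation_along_outgoing_trajectory
    (d : ℕ) (hd : 1 ≤ d) (δ C ε₁ ε₂ R T : ℝ)
    (hδ : 0 < δ) (hC : 0 < C) (hε₁ : 0 < ε₁) (hε₂ : 0 < ε₂)
    (hR : 0 ≤ R) (hT : 0 < T)
    (x ξ ξ' : ℝ → EuclideanSpace ℝ (Fin d))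
    (hx : ContinuousOn x (Set.Icc 0 T))
    (hxlow : ∀ t ∈ Set.Icc (0 : ℝ) T, ‖x t‖ ≥ ε₁ * R + ε₂ * t)
    (hξ : ∀ t ∈ Set.Icc (0 : ℝ) T, HasDerivAt ξ (ξ' t) t)
    (hξ' : ContinuousOn ξ' (Set.Icc 0 T))
    (hbound : ∀ t ∈ Set.Icc (0 : ℝ) T, ‖ξ' t‖ ≤ C * (1 + ‖x t‖) ^ (-1 - δ)) :
    ‖ξ T - ξ 0‖ ≤ C * ε₂⁻¹ * δ⁻¹ * (1 + ε₁ * R) ^ (-δ) := by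
  have hT' : (0:ℝ) ≤ T := hT.le
  have huIcc : Set.uIcc (0:ℝ) T = Set.Icc 0 T := Set.uIcc_of_le hT'
  -- pointwise positivity of the base
  have hbase : ∀ t ∈ Set.Icc (0:ℝ) T, (0:ℝ) < 1 + ε₁ * R + ε₂ * t := by
    intro t ht
    have := ht.1
    nlinarith [mul_nonneg hε₁.le hR, mul_nonneg hε₂.le this]
  -- majorant g and antiderivative F
  set g : ℝ → ℝ := fun t => C * (1 + ε₁ * R + ε₂ * t) ^ (-1 - δ) with hg
  set F : ℝ → ℝ := fun t => -(C * ε₂⁻¹ * δ⁻¹) * (1 + ε₁ * R + ε₂ * t) ^ (-δ) with hF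
  have hFderiv : ∀ t ∈ Set.Icc (0:ℝ) T, HasDerivAt F (g t) t := by
    intro t ht
    have hb := hbase t ht
    have h1 : HasDerivAt (fun t : ℝ => 1 + ε₁ * R + ε₂ * t) ε₂ t := by
      simpa using ((hasDerivAt_id t).const_mul ε₂).const_add (1 + ε₁ * R)
    have h2 : HasDerivAt (fun t : ℝ => (1 + ε₁ * R + ε₂ * t) ^ (-δ))
        ((-δ) * (1 + ε₁ * R + ε₂ * t) ^ (-δ - 1) * ε₂) t := by
      refine (Real.hasDerivAt_rpow_const (p := -δ) (Or.inl hb.ne')).comp t h1 |>.congr_deriv ?_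
      ring
    have := h2.const_mul (-(C * ε₂⁻¹ * δ⁻¹))
    refine this.congr_deriv ?_
    have : (-δ - 1 : ℝ) = -1 - δ := by ring
    rw [this]
    field_simp
    ring
  have hgint : IntervalIntegrable g volume 0 T := by
    apply ContinuousOn.intervalIntegrable
    rw [huIcc]
    exact continuousOn_const.mul
      (((continuous_const.add (continuous_const.mul continuous_id)).continuousOn).rpow_const
        (fun t ht => Or.inl (hbase t ht).ne'))
  have hξint : IntervalIntegrable ξ' volume 0 T := by
    apply ContinuousOn.intervalIntegrable; rwa [huIcc]
  have heq : ξ T - ξ 0 = ∫ t in (0:ℝ)..T, ξ' t := by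
    rw [intervalIntegral.integral_eq_sub_of_hasDerivAt (fun t ht => hξ t (huIcc ▸ ht)) hξint]
  rw [heq]
  have hpt : ∀ t ∈ Set.Icc (0:ℝ) T, ‖ξ' t‖ ≤ g t := by
    intro t ht
    refine (hbound t ht).trans ?_
    have h1 : (1:ℝ) + ε₁ * R + ε₂ * t ≤ 1 + ‖x t‖ := by
      have := hxlow t ht; linarith
    exact mul_le_mul_of_nonneg_left
      (Real.rpow_le_rpow_of_nonpos (hbase t ht) h1 (by linarith)) hC.le
  have hmain : ‖∫ t in (0:ℝ)..T, ξ' t‖ ≤ ∫ t in (0:ℝ)..T, g t := by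
    refine (intervalIntegral.norm_integral_le_abs_of_norm_le ?_ hgint).trans ?_
    · filter_upwards [ae_restrict_mem measurableSet_Ioc] with t ht
      exact hpt t (Set.Ioc_subset_Icc_self ((Set.uIoc_of_le hT') ▸ ht))
    · exact le_of_eq (abs_of_nonneg (intervalIntegral.integral_nonneg hT'
        (fun t ht => (norm_nonneg _).trans (hpt t ht))))
  refine hmain.trans ?_
  rw [intervalIntegral.integral_eq_sub_of_hasDerivAt (fun t ht => hFderiv t (huIcc ▸ ht)) hgint]
  have hb0 : (0:ℝ) < 1 + ε₁ * R := by nlinarith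
  have hbT : (0:ℝ) < 1 + ε₁ * R + ε₂ * T := hbase T (Set.right_mem_Icc.mpr hT')
  have hpos : 0 ≤ C * ε₂⁻¹ * δ⁻¹ := by positivity
  have hrT : (0:ℝ) ≤ (1 + ε₁ * R + ε₂ * T) ^ (-δ) := Real.rpow_nonneg hbT.le _
  simp only [hF]
  have : -(C * ε₂⁻¹ * δ⁻¹) * (1 + ε₁ * R + ε₂ * T) ^ (-δ) -
      -(C * ε₂⁻¹ * δ⁻¹) * (1 + ε₁ * R + ε₂ * 0) ^ (-δ)
      = C * ε₂⁻¹ * δ⁻¹ * ((1 + ε₁ * R + ε₂ * 0) ^ (-δ) - (1 + ε₁ * R + ε₂ * T) ^ (-δ)) := by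
    ring
  rw [this]
  have h0 : (1:ℝ) + ε₁ * R + ε₂ * 0 = 1 + ε₁ * R := by ring
  rw [h0]
  nlinarith [mul_nonneg hpos hrT]
end

section
/- Let d ≥ 1 and η ∈ (0, 1/6]. Then there exists ε₁ > 0, depending only on η, with the following property: for every nonzero F ∈ ℝ^d, every T > 0, and every continuously differentiable x : [0,T] → ℝ^d satisfying |x′(t) − F| ≤ η|F| for all t ∈ [0,T] and ⟨x(0), F⟩ ≥ −(1 − 2η)|x(0)||F|, one has |x(t)| ≥ ε₁(|x(0)| + |F|t) for all t ∈ [0,T]. -/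
open scoped RealInnerProductSpace

set_option maxHeartbeats 1000000 in
/-- Geometric non-return lemma: a trajectory whose velocity stays `η|F|`-close
to a fixed nonzero vector `F`, starting outside a conical neighborhood of the
incoming direction `-F`, satisfies `‖x(t)‖ ≥ ε₁(‖x(0)‖ + ‖F‖ t)`, where
`ε₁ > 0` depends only on `η`. -/
theorem nonreturn_lemma
    (η : ℝ) (hη : η ∈ Set.Ioc (0 : ℝ) (1 / 6)) :
    ∃ ε₁ > (0 : ℝ),
      ∀ (d : ℕ), 1 ≤ d →
      ∀ F : EuclideanSpace ℝ (Fin d), F ≠ 0 →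
      ∀ T : ℝ, 0 < T →
      ∀ x x' : ℝ → EuclideanSpace ℝ (Fin d),
        (∀ t ∈ Set.Icc (0 : ℝ) T, HasDerivAt x (x' t) t) →
        ContinuousOn x' (Set.Icc 0 T) →
        (∀ t ∈ Set.Icc (0 : ℝ) T, ‖x' t - F‖ ≤ η * ‖F‖) →
        ⟪x 0, F⟫ ≥ -(1 - 2 * η) * ‖x 0‖ * ‖F‖ →
        ∀ t ∈ Set.Icc (0 : ℝ) T, ‖x t‖ ≥ ε₁ * (‖x 0‖ + ‖F‖ * t) := by
  obtain ⟨hη0, hη6⟩ := hη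
  set s : ℝ := η * (1 - η) with hs
  have hs0 : 0 ≤ s := by nlinarith
  set σ : ℝ := Real.sqrt s with hσ
  have hσ2 : σ ^ 2 = s := Real.sq_sqrt hs0
  have hσgt : η < σ := by
    nlinarith [Real.sqrt_nonneg s]
  refine ⟨σ - η, by linarith, ?_⟩
  intro d _hd F hF T hT x x' hderiv _hcont hbound hinit t ht
  obtain ⟨ht0, htT⟩ := ht
  have hF0 : (0 : ℝ) ≤ ‖F‖ := norm_nonneg F
  set g : ℝ → EuclideanSpace ℝ (Fin d) := fun u => x u - x 0 - u • F with hg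
  have hgderiv : ∀ u ∈ Set.Icc (0 : ℝ) T,
      HasDerivWithinAt g (x' u - F) (Set.Icc 0 T) u := by
    intro u hu
    have h1 : HasDerivAt (fun u : ℝ => u • F) F u := by
      simpa using (hasDerivAt_id u).smul_const F
    exact (((hderiv u hu).sub_const (x 0)).sub h1).hasDerivWithinAt
  have hgbound : ‖g t - g 0‖ ≤ η * ‖F‖ * (t - 0) :=
    norm_image_sub_le_of_norm_deriv_le_segment' hgderiv
      (fun u hu => hbound u ⟨hu.1, hu.2.le⟩) t ⟨ht0, htT⟩
  have hg0 : g 0 = 0 := by simp [hg]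
  have hgt : ‖g t‖ ≤ η * ‖F‖ * t := by simpa [hg0] using hgbound
  set a : ℝ := ‖x 0‖ with ha
  set b : ℝ := ‖F‖ * t with hb
  have hb0 : 0 ≤ b := mul_nonneg hF0 ht0
  have ha0 : 0 ≤ a := norm_nonneg _
  have hN : ‖x 0 + t • F‖ ≤ ‖x t‖ + ‖g t‖ := by
    have h2 : x 0 + t • F = x t - g t := by
      simp only [hg]; abel
    rw [h2]; exact norm_sub_le _ _
  have hN2 : ‖x 0 + t • F‖ ^ 2 = a ^ 2 + 2 * (t * ⟪x 0, F⟫) + b ^ 2 := by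
    rw [norm_add_sq_real, real_inner_smul_right, norm_smul]
    simp only [Real.norm_eq_abs, abs_of_nonneg ht0, hb, ha]
    ring
  have hin : t * (-(1 - 2 * η) * a * ‖F‖) ≤ t * ⟪x 0, F⟫ :=
    mul_le_mul_of_nonneg_left hinit ht0
  have hin' : -(1 - 2 * η) * (a * b) ≤ t * ⟪x 0, F⟫ := by
    have heq : t * (-(1 - 2 * η) * a * ‖F‖) = -(1 - 2 * η) * (a * b) := by
      rw [hb]; ring
    linarith [hin, heq.le, heq.ge]
  have h1 : s * (a + b) ^ 2 ≤ ‖x 0 + t • F‖ ^ 2 := by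
    rw [hN2, hs]
    nlinarith [sq_nonneg (a - b), mul_nonneg ha0 hb0, hin',
      mul_nonneg (mul_nonneg ha0 hb0) (mul_pos hη0 hη0).le]
  have hkey : σ * (a + b) ≤ ‖x 0 + t • F‖ := by
    have hσab : 0 ≤ σ * (a + b) :=
      mul_nonneg (Real.sqrt_nonneg s) (by linarith)
    have h2 : (σ * (a + b)) ^ 2 ≤ ‖x 0 + t • F‖ ^ 2 := by
      rw [mul_pow, hσ2]; exact h1
    exact (pow_le_pow_iff_left₀ hσab (norm_nonneg _) two_ne_zero).mp h2
  have hgt' : ‖g t‖ ≤ η * b := by rw [hb, ← mul_assoc]; exact hgt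
  have hfin : σ * (a + b) - η * b ≤ ‖x t‖ := by linarith
  calc (σ - η) * (a + b) ≤ σ * (a + b) - η * b := by nlinarith [mul_nonneg hη0.le ha0]
    _ ≤ ‖x t‖ := hfin
end

section
/- Let ν ∈ (0,1), C > 0, C₁ > 0, C₀ ≥ 1 and s > 1. Let G : [1,∞) × [1,∞) → [0,∞) be nondecreasing in its first argument and satisfy G(r, n·t) ≤ C ν^n + C₁ n (r/t)^s for every positive integer n and all reals r ≥ 1, t ≥ C₀ r. Then there exist C₀′ ≥ 1 and C₂ > 0, depending only on ν, C, C₁, C₀ and s, such that G(R, T) ≤ C₂ (R/T)^{(s−1)/3} for all R ≥ 1 and T ≥ C₀′ R. -/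
open Real

private lemma geom_bound (ν : ℝ) (h0 : 0 < ν) (h1 : ν < 1) (k : ℕ) :
    ∃ B : ℝ, 0 ≤ B ∧ ∀ n : ℕ, (n : ℝ) ^ k * ν ^ n ≤ B := by
  have hnorm : ‖ν‖ < 1 := by rwa [Real.norm_eq_abs, abs_of_pos h0]
  have hsum : Summable (fun n : ℕ => (n : ℝ) ^ k * ν ^ n) :=
    (summable_norm_pow_mul_geometric_of_norm_lt_one (R := ℝ) k hnorm).of_norm
  obtain ⟨b, hb⟩ := hsum.tendsto_atTop_zero.bddAbove_range
  exact ⟨max b 0, le_max_right _ _,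
    fun n => le_max_of_le_left (hb (Set.mem_range_self n))⟩

set_option maxHeartbeats 1000000 in
/-- Bootstrapping step: the inductive estimate `G(r, n t) ≤ C νⁿ + C₁ n (r/t)ˢ`
for a function `G` nondecreasing in its first argument yields the polynomial
decay `G(R, T) ≤ C₂ (R/T)^{(s-1)/3}` for `T ≥ C₀' R`, with constants `C₀', C₂`
depending only on `ν, C, C₁, C₀, s`. -/
theorem bootstrap_polynomial_decay
    (ν C C₁ C₀ s : ℝ)
    (hν : ν ∈ Set.Ioo (0 : ℝ) 1) (hC : 0 < C) (hC₁ : 0 < C₁)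
    (hC₀ : 1 ≤ C₀) (hs : 1 < s) :
    ∃ C₀' ≥ (1 : ℝ), ∃ C₂ > (0 : ℝ),
      ∀ G : ℝ → ℝ → ℝ,
        -- `G` maps `[1,∞) × [1,∞)` into `[0,∞)`
        (∀ r t : ℝ, 1 ≤ r → 1 ≤ t → 0 ≤ G r t) →
        -- `G` is nondecreasing in its first argument
        (∀ t : ℝ, 1 ≤ t → ∀ r r' : ℝ, 1 ≤ r → r ≤ r' → G r t ≤ G r' t) →
        -- the inductive estimate
        (∀ n : ℕ, 0 < n → ∀ r t : ℝ, 1 ≤ r → C₀ * r ≤ t →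
            G r ((n : ℝ) * t) ≤ C * ν ^ n + C₁ * (n : ℝ) * (r / t) ^ s) →
        ∀ R T : ℝ, 1 ≤ R → C₀' * R ≤ T →
          G R T ≤ C₂ * (R / T) ^ ((s - 1) / 3) := by
  obtain ⟨hν0, hν1⟩ := hν
  set a : ℝ := (s - 1) / 3 with ha_def
  have ha0 : 0 < a := by rw [ha_def]; exact div_pos (by linarith) (by norm_num)
  set k : ℕ := ⌈s⌉₊ with hk_def
  obtain ⟨B, hB0, hB⟩ := geom_bound ν hν0 hν1 k
  have h8a : (0:ℝ) < (8:ℝ) ^ a := Real.rpow_pos_of_pos (by norm_num) a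
  refine ⟨C₀ ^ 2, one_le_pow₀ hC₀, C * 8 ^ a * B + C₁, by positivity, ?_⟩
  intro G hG0 hGmono hind R T hR hT
  have hR0 : (0:ℝ) < R := by linarith
  have hC₀sq : (1:ℝ) ≤ C₀ ^ 2 := one_le_pow₀ hC₀
  have hT0 : (0:ℝ) < T := by nlinarith
  set x : ℝ := T / R with hxdef
  have hx : C₀ ^ 2 ≤ x := (le_div_iff₀ hR0).2 hT
  have hx1 : (1:ℝ) ≤ x := le_trans hC₀sq hx
  have hx0 : (0:ℝ) < x := by linarith
  set y : ℝ := x ^ ((1:ℝ)/3) with hydef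
  have hy1 : (1:ℝ) ≤ y := by
    rw [hydef]
    calc (1:ℝ) = 1 ^ ((1:ℝ)/3) := (Real.one_rpow _).symm
    _ ≤ x ^ ((1:ℝ)/3) := Real.rpow_le_rpow zero_le_one hx1 (by norm_num)
  have hy0 : (0:ℝ) < y := by linarith
  have hy3 : y ^ (3:ℕ) = x := by
    rw [hydef, ← Real.rpow_natCast (x ^ ((1:ℝ)/3)) 3, ← Real.rpow_mul hx0.le]
    norm_num
  set n : ℕ := ⌊y⌋₊ with hndef
  have hn1 : 1 ≤ n := Nat.le_floor (by exact_mod_cast hy1)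
  have hnR : (1:ℝ) ≤ (n:ℝ) := by exact_mod_cast hn1
  have hn0 : (0:ℝ) < (n:ℝ) := by linarith
  have hny : (n:ℝ) ≤ y := Nat.floor_le hy0.le
  have hy2n : y ≤ 2 * n := by
    have := Nat.lt_floor_add_one y
    rw [← hndef] at this
    linarith
  -- x ≤ 8 n³
  have hx8 : x ≤ 8 * (n:ℝ) ^ (3:ℕ) := by
    have h := pow_le_pow_left₀ hy0.le hy2n 3
    rw [hy3] at h
    nlinarith
  -- C₀ ≤ y²
  have hyC : C₀ ≤ y ^ 2 := by
    by_contra h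
    push_neg at h
    have h1 : y ≤ y ^ 2 := by nlinarith
    have h2 : y < C₀ := lt_of_le_of_lt h1 h
    have h3 : y ^ 3 < C₀ ^ 2 := by nlinarith
    have h4 : C₀ ^ 2 ≤ y ^ 3 := by rw [show y ^ 3 = y ^ (3:ℕ) from rfl, hy3]; exact hx
    linarith
  have hCnx : C₀ * n ≤ x := by
    calc C₀ * (n:ℝ) ≤ (y^2) * y := by nlinarith
    _ = y ^ (3:ℕ) := by ring
    _ = x := hy3
  have hCt : C₀ * R ≤ T / n := by
    rw [le_div_iff₀ hn0]
    have hTx : T = x * R := by rw [hxdef]; field_simp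
    calc C₀ * R * (n:ℝ) = (C₀ * (n:ℝ)) * R := by ring
    _ ≤ x * R := mul_le_mul_of_nonneg_right hCnx hR0.le
    _ = T := hTx.symm
  have hTnt : (n:ℝ) * (T / n) = T := by field_simp
  have key := hind n (by omega) R (T / n) hR hCt
  rw [hTnt] at key
  have hRt : R / (T / (n:ℝ)) = (n:ℝ) / x := by
    rw [hxdef, div_div_eq_mul_div, div_div_eq_mul_div, mul_comm]
  rw [hRt] at key
  have hxa : (0:ℝ) < x ^ a := Real.rpow_pos_of_pos hx0 a
  -- Term 1
  have hterm1 : C * ν ^ n ≤ C * 8 ^ a * B * (x ^ a)⁻¹ := by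
    rw [← div_eq_mul_inv, le_div_iff₀ hxa]
    have hxa_le : x ^ a ≤ 8 ^ a * (n:ℝ) ^ k := by
      calc x ^ a ≤ (8 * (n:ℝ) ^ (3:ℕ)) ^ a :=
            Real.rpow_le_rpow hx0.le hx8 ha0.le
      _ = 8 ^ a * ((n:ℝ) ^ (3:ℕ)) ^ a := Real.mul_rpow (by norm_num) (by positivity)
      _ = 8 ^ a * (n:ℝ) ^ ((3:ℝ) * a) := by
            rw [← Real.rpow_natCast (n:ℝ) 3, ← Real.rpow_mul hn0.le]
            norm_num
      _ ≤ 8 ^ a * (n:ℝ) ^ ((k:ℝ)) := by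
            have h3a : (3:ℝ) * a ≤ (k:ℝ) := by
              have : s ≤ (k:ℝ) := Nat.le_ceil s
              rw [ha_def]; linarith
            have := Real.rpow_le_rpow_of_exponent_le hnR h3a
            nlinarith [h8a]
      _ = 8 ^ a * (n:ℝ) ^ k := by rw [Real.rpow_natCast]
    calc C * ν ^ n * x ^ a ≤ C * ν ^ n * (8 ^ a * (n:ℝ) ^ k) :=
          mul_le_mul_of_nonneg_left hxa_le (by positivity)
    _ = C * 8 ^ a * ((n:ℝ) ^ k * ν ^ n) := by ring
    _ ≤ C * 8 ^ a * B := mul_le_mul_of_nonneg_left (hB n) (by positivity)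
  -- Term 2
  have hterm2 : C₁ * (n:ℝ) * ((n:ℝ) / x) ^ s ≤ C₁ * (x ^ a)⁻¹ := by
    have hs0 : (0:ℝ) ≤ s := by linarith
    have hns : (n:ℝ) ^ s ≤ y ^ s := Real.rpow_le_rpow hn0.le hny hs0
    have hys : y ^ s = x ^ ((1:ℝ)/3 * s) := by
      rw [hydef, ← Real.rpow_mul hx0.le]
    have hxs : (0:ℝ) < x ^ s := Real.rpow_pos_of_pos hx0 s
    calc C₁ * (n:ℝ) * ((n:ℝ) / x) ^ s
        = C₁ * ((n:ℝ) * ((n:ℝ) ^ s / x ^ s)) := by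
          rw [Real.div_rpow hn0.le hx0.le]; ring
      _ ≤ C₁ * (y * (y ^ s / x ^ s)) := by
          have hyspos : (0:ℝ) < y ^ s := Real.rpow_pos_of_pos hy0 s
          have h1 : (n:ℝ) * ((n:ℝ) ^ s / x ^ s) ≤ y * (y ^ s / x ^ s) := by
            apply mul_le_mul hny (by gcongr) (by positivity) hy0.le
          nlinarith
      _ = C₁ * x ^ ((1:ℝ)/3 + (1:ℝ)/3 * s - s) := by
          rw [hys, hydef, Real.rpow_sub hx0, Real.rpow_add hx0]
          ring
      _ ≤ C₁ * x ^ (-a) := by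
          have hexp : (1:ℝ)/3 + (1:ℝ)/3 * s - s ≤ -a := by rw [ha_def]; linarith
          have := Real.rpow_le_rpow_of_exponent_le hx1 hexp
          nlinarith
      _ = C₁ * (x ^ a)⁻¹ := by rw [Real.rpow_neg hx0.le]
  have hRTx : (R / T) ^ a = (x ^ a)⁻¹ := by
    rw [show R / T = x⁻¹ by rw [hxdef, inv_div], ← Real.rpow_neg_one x,
      ← Real.rpow_mul hx0.le]
    rw [← Real.rpow_neg hx0.le]
    norm_num
  calc G R T ≤ C * ν ^ n + C₁ * (n:ℝ) * ((n:ℝ) / x) ^ s := key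
    _ ≤ C * 8 ^ a * B * (x ^ a)⁻¹ + C₁ * (x ^ a)⁻¹ := add_le_add hterm1 hterm2
    _ = (C * 8 ^ a * B + C₁) * (x ^ a)⁻¹ := by ring
    _ = (C * 8 ^ a * B + C₁) * (R / T) ^ a := by rw [hRTx]
end

section
/- In the scalar symbol setting: for every η ∈ (0, 1/6] there exist ε > 0 (a smallness constant for V), ϵ > 0, ε₁ > 0, ε₂ > 0 and R₀ ≥ 1, depending only on η, d, m, δ, λ, ε₀, c₀, C₀ and the constants c_{αβ}, such that the following holds whenever V satisfies |∂_ξ^α ∂_x^β V(x,ξ)| ≤ ε for all |α| + |β| ≤ 1. Let (x(t), ξ(t)), t ≥ 0, be a Hamiltonian trajectory of H = A⁰ + V on energy level τ with |τ − λ| ≤ ϵ, and suppose R := |x(0)| ≥ R₀, |∇A⁰(ξ(0))| ≥ ε₀/2, and ⟨x(0), ∇A⁰(ξ(0))⟩ ≥ −(1 − η)|x(0)| |∇A⁰(ξ(0))| (i.e., x(0) avoids a conical neighborhood of the incoming direction −∇A⁰(ξ(0))). Then for all t ≥ 0 one has |ξ(t) − ξ(0)| ≤ η and |x(t)| ≥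 ε₁R + ε₂t. -/
open scoped RealInnerProductSpace

open Set
open scoped RealInnerProductSpace

section helpers
set_option linter.unusedSectionVars false

variable {E : Type*} [NormedAddCommGroup E] [InnerProductSpace ℝ E] [CompleteSpace E]

lemma my_grad_eq (f : E → ℝ) (x : E) :
    gradient f x = (InnerProductSpace.toDual ℝ E).symm (fderiv ℝ f x) := rfl

lemma my_grad_sub_norm (f g : E → ℝ) (x y : E) :
    ‖gradient f x - gradient g y‖ = ‖fderiv ℝ f x - fderiv ℝ g y‖ := by
  rw [my_grad_eq, my_grad_eq, ← map_sub, LinearIsometryEquiv.norm_map]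

lemma my_grad_norm (f : E → ℝ) (x : E) : ‖gradient f x‖ = ‖fderiv ℝ f x‖ := by
  rw [my_grad_eq, LinearIsometryEquiv.norm_map]

lemma my_grad_add (f g : E → ℝ) (x : E) (hf : DifferentiableAt ℝ f x)
    (hg : DifferentiableAt ℝ g x) :
    gradient (fun y => f y + g y) x = gradient f x + gradient g x := by
  rw [my_grad_eq, my_grad_eq, my_grad_eq, fderiv_fun_add hf hg, map_add]

lemma my_grad_const_add (c : ℝ) (g : E → ℝ) (x : E) :
    gradient (fun y => c + g y) x = gradient g x := by
  rw [my_grad_eq, my_grad_eq, fderiv_const_add]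

lemma my_norm_iteratedFDeriv_one {F : Type*} [NormedAddCommGroup F] [NormedSpace ℝ F]
    {E' : Type*} [NormedAddCommGroup E'] [NormedSpace ℝ E']
    (f : E' → F) (x : E') : ‖iteratedFDeriv ℝ 1 f x‖ = ‖fderiv ℝ f x‖ := by
  calc ‖iteratedFDeriv ℝ 1 f x‖ = ‖iteratedFDeriv ℝ (0 + 1) f x‖ := by rw [zero_add]
    _ = ‖iteratedFDeriv ℝ 0 (fderiv ℝ f) x‖ := (norm_iteratedFDeriv_fderiv).symm
    _ = ‖fderiv ℝ f x‖ := norm_iteratedFDeriv_zero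

lemma my_grad_lip (f : E → ℝ) (hf : ContDiff ℝ (⊤ : ℕ∞) f) {s : Set E} (hs : Convex ℝ s) {C : ℝ}
    (hC : ∀ z ∈ s, ‖iteratedFDeriv ℝ 2 f z‖ ≤ C) {a b : E} (ha : a ∈ s) (hb : b ∈ s) :
    ‖gradient f b - gradient f a‖ ≤ C * ‖b - a‖ := by
  rw [my_grad_sub_norm]
  have hdf : ContDiff ℝ (⊤ : ℕ∞) (fderiv ℝ f) := hf.fderiv_right (by simp)
  refine hs.norm_image_sub_le_of_norm_hasFDerivWithin_le
    (f' := fun z => fderiv ℝ (fderiv ℝ f) z)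
    (fun z _ => (hdf.differentiable (by simp) z).hasFDerivAt.hasFDerivWithinAt)
    (fun z hz => ?_) ha hb
  calc ‖fderiv ℝ (fderiv ℝ f) z‖ = ‖iteratedFDeriv ℝ 1 (fderiv ℝ f) z‖ :=
        (my_norm_iteratedFDeriv_one _ _).symm
    _ = ‖iteratedFDeriv ℝ 2 f z‖ := by
        simpa using norm_iteratedFDeriv_fderiv (𝕜 := ℝ) (f := f) (x := z) (n := 1)
    _ ≤ C := hC z hz

lemma my_outgoing_norm_lower (x0 v : E) {η t : ℝ} (hη0 : 0 < η) (hη1 : η ≤ 1) (ht : 0 ≤ t)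
    (hcone : ⟪x0, v⟫ ≥ -(1 - η) * ‖x0‖ * ‖v‖) :
    Real.sqrt (η / 2) * (‖x0‖ + t * ‖v‖) ≤ ‖x0 + t • v‖ := by
  have hsq : (η / 2) * (‖x0‖ + t * ‖v‖) ^ 2 ≤ ‖x0 + t • v‖ ^ 2 := by
    rw [norm_add_sq_real, real_inner_smul_right, norm_smul, Real.norm_eq_abs, abs_of_nonneg ht]
    nlinarith [sq_nonneg (‖x0‖ - t * ‖v‖), mul_le_mul_of_nonneg_left hcone ht,
      mul_nonneg (mul_nonneg ht (norm_nonneg x0)) (norm_nonneg v), norm_nonneg x0,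
      norm_nonneg v]
  calc Real.sqrt (η / 2) * (‖x0‖ + t * ‖v‖)
      = Real.sqrt ((η / 2) * (‖x0‖ + t * ‖v‖) ^ 2) := by
        rw [Real.sqrt_mul (by positivity), Real.sqrt_sq (by positivity)]
    _ ≤ Real.sqrt (‖x0 + t • v‖ ^ 2) := Real.sqrt_le_sqrt hsq
    _ = ‖x0 + t • v‖ := Real.sqrt_sq (norm_nonneg _)

end helpers

set_option maxHeartbeats 1600000 in
/-- Classical content of claim (2.18) / Proposition 2.4: a Hamiltonian
trajectory of `H = A⁰ + V` on an energy level near `λ`, starting far from the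
origin (`‖x(0)‖ ≥ R₀`) with `‖∇A⁰(ξ(0))‖ ≥ ε₀/2` and with `x(0)` outside a
conical neighborhood of the incoming direction `-∇A⁰(ξ(0))`, stays in the zone
`{‖x‖ ≥ ε₁ R + ε₂ t}` for all `t ≥ 0`, and its momentum varies by at most `η`.
The constants `ε, ϵ, ε₁, ε₂, R₀` depend only on `η, d, m, δ, λ, ε₀, c₀, C₀`
and the constants `cA, cV`. -/
theorem outgoing_trajectories_stay_outgoing
    (d : ℕ) (hd : 1 ≤ d) (m δ lam ε₀ c₀ C₀ : ℝ)
    (hm : 0 < m) (hδ : 0 < δ) (hε₀ : 0 < ε₀) (hc₀ : 0 < c₀)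
    (cA : ℕ → ℝ) (cV : ℕ → ℕ → ℝ)
    (η : ℝ) (hη : η ∈ Set.Ioc (0 : ℝ) (1 / 6)) :
    ∃ ε > (0 : ℝ), ∃ ϵ > (0 : ℝ), ∃ ε₁ > (0 : ℝ), ∃ ε₂ > (0 : ℝ), ∃ R₀ ≥ (1 : ℝ),
      ∀ (A0 : EuclideanSpace ℝ (Fin d) → ℝ)
        (V : EuclideanSpace ℝ (Fin d) → EuclideanSpace ℝ (Fin d) → ℝ),
        -- `A⁰` is smooth with polynomially bounded derivatives
        ContDiff ℝ (⊤ : ℕ∞) A0 →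
        (∀ (n : ℕ) (ξ : EuclideanSpace ℝ (Fin d)),
            ‖iteratedFDeriv ℝ n A0 ξ‖ ≤ cA n * (1 + ‖ξ‖) ^ m) →
        -- ellipticity
        (∀ ξ : EuclideanSpace ℝ (Fin d), A0 ξ ≥ c₀ * ‖ξ‖ ^ m - C₀) →
        -- ξ-microhyperbolicity of `A⁰` at energy level `λ`
        (∀ ξ : EuclideanSpace ℝ (Fin d), ∃ l : EuclideanSpace ℝ (Fin d),
            ‖l‖ ≤ 1 ∧ ⟪l, gradient A0 ξ⟫ + |A0 ξ - lam| ≥ ε₀) →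
        -- `V` is smooth with the symbol-type decay bounds
        ContDiff ℝ (⊤ : ℕ∞)
          (fun p : EuclideanSpace ℝ (Fin d) × EuclideanSpace ℝ (Fin d) => V p.1 p.2) →
        (∀ (k n : ℕ) (x ξ : EuclideanSpace ℝ (Fin d)),
            ‖iteratedFDeriv ℝ n
                (fun x' => iteratedFDeriv ℝ k (fun ξ' => V x' ξ') ξ) x‖
              ≤ cV k n * (1 + ‖ξ‖) ^ m * (1 + ‖x‖) ^ (-δ - (n : ℝ))) →
        -- smallness of `V` up to first order
        (∀ x ξ : EuclideanSpace ℝ (Fin d), |V x ξ| ≤ ε) →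
        (∀ x ξ : EuclideanSpace ℝ (Fin d), ‖gradient (fun x' => V x' ξ) x‖ ≤ ε) →
        (∀ x ξ : EuclideanSpace ℝ (Fin d), ‖gradient (fun ξ' => V x ξ') ξ‖ ≤ ε) →
        -- Hamiltonian trajectory for `t ≥ 0` on energy level `τ`, `|τ - λ| ≤ ϵ`
        ∀ (x ξ : ℝ → EuclideanSpace ℝ (Fin d)) (τ : ℝ),
          (∀ t ∈ Set.Ici (0 : ℝ),
            HasDerivAt x (gradient (fun ξ' => A0 ξ' + V (x t) ξ') (ξ t)) t) →
          (∀ t ∈ Set.Ici (0 : ℝ),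
            HasDerivAt ξ (-gradient (fun x' => A0 (ξ t) + V x' (ξ t)) (x t)) t) →
          (∀ t ∈ Set.Ici (0 : ℝ), A0 (ξ t) + V (x t) (ξ t) = τ) →
          |τ - lam| ≤ ϵ →
          -- initial position is far away
          ‖x 0‖ ≥ R₀ →
          -- nondegenerate initial group velocity
          ‖gradient A0 (ξ 0)‖ ≥ ε₀ / 2 →
          -- `x 0` avoids a conical neighborhood of `-∇A⁰(ξ 0)`
          ⟪x 0, gradient A0 (ξ 0)⟫ ≥ -(1 - η) * ‖x 0‖ * ‖gradient A0 (ξ 0)‖ →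
          ∀ t ∈ Set.Ici (0 : ℝ),
            ‖ξ t - ξ 0‖ ≤ η ∧ ‖x t‖ ≥ ε₁ * ‖x 0‖ + ε₂ * t := by
  obtain ⟨hη0, hη16⟩ := hη
  -- constants
  set P : ℝ := max ((C₀ + |lam| + 2) / c₀) 0 with hPdef
  set M : ℝ := P ^ (1 / m) with hMdef
  have hM0 : 0 ≤ M := Real.rpow_nonneg (le_max_right _ _) _
  set K : ℝ := (1 + M) ^ m with hKdef
  have hK1 : (1 : ℝ) ≤ K := by
    calc (1 : ℝ) = 1 ^ m := (Real.one_rpow m).symm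
      _ ≤ (1 + M) ^ m := Real.rpow_le_rpow (by norm_num) (by linarith) hm.le
  set L : ℝ := max (cA 2) 0 * K with hLdef
  have hL0 : 0 ≤ L := mul_nonneg (le_max_right _ _) (by linarith)
  set ε₁ : ℝ := Real.sqrt (η / 2) with hε₁def
  have hε₁0 : 0 < ε₁ := Real.sqrt_pos.2 (by linarith)
  set ε₂ : ℝ := ε₁ * ε₀ / 4 with hε₂def
  have hε₂0 : 0 < ε₂ := div_pos (mul_pos hε₁0 hε₀) (by norm_num)
  set η' : ℝ := min η (ε₂ / (2 * (L + 1))) with hη'def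
  have hη'0 : 0 < η' := lt_min hη0 (div_pos hε₂0 (by linarith))
  set ε : ℝ := min 1 (ε₂ / 2) with hεdef
  have hε0 : 0 < ε := lt_min one_pos (by linarith)
  set D : ℝ := max (cV 0 1) 0 * K + 1 with hDdef
  have hD1 : 0 ≤ max (cV 0 1) 0 * K := mul_nonneg (le_max_right _ _) (by linarith)
  have hD0 : 0 < D := by linarith
  set c : ℝ := η' * ε₂ * δ / (2 * D) with hcdef
  have hc0 : 0 < c := div_pos (mul_pos (mul_pos hη'0 hε₂0) hδ) (by linarith)
  set R₀ : ℝ := max 1 ((1 / ε₁) * c ^ (-(1 / δ))) with hR₀def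
  refine ⟨ε, hε0, 1, one_pos, ε₁, hε₁0, ε₂, hε₂0, R₀, le_max_left _ _, ?_⟩
  intro A0 V hA0 hA0bd hell _hmicro hV hVbd hVsmall hVx hVξ x ξ τ hx' hξ' hτ hτlam hR hv0 hcone
  have hR1 : (1 : ℝ) ≤ ‖x 0‖ := le_trans (le_max_left _ _) hR
  have hRpos : (0 : ℝ) < ‖x 0‖ := lt_of_lt_of_le one_pos hR1
  set v : EuclideanSpace ℝ (Fin d) := gradient A0 (ξ 0) with hvdef
  -- differentiability facts
  have hA0d : Differentiable ℝ A0 := hA0.differentiable (by simp)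
  have hVξd : ∀ cx : EuclideanSpace ℝ (Fin d),
      Differentiable ℝ (fun ξ' => V cx ξ') := fun cx =>
    (hV.comp (f := fun ξ' : EuclideanSpace ℝ (Fin d) => (cx, ξ')) (ContDiff.prodMk (contDiff_const (c := cx)) contDiff_id)).differentiable (by simp)
  -- energy conservation ⇒ momentum bounded
  have hξM : ∀ t ∈ Set.Ici (0 : ℝ), ‖ξ t‖ ≤ M := by
    intro t ht
    have h1 := hτ t ht
    have h2 := abs_le.1 (hVsmall (x t) (ξ t))
    have h3 : |τ| ≤ |lam| + 1 := by
      have h4 := abs_sub_abs_le_abs_sub τ lam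
      linarith
    have hεle1 : ε ≤ 1 := min_le_left _ _
    have hAle : A0 (ξ t) ≤ |lam| + 2 := by
      have := (abs_le.1 h3).2
      linarith
    have hrp : ‖ξ t‖ ^ m ≤ P := by
      have h5 := hell (ξ t)
      have h6 : c₀ * ‖ξ t‖ ^ m ≤ C₀ + |lam| + 2 := by linarith
      have h7 : ‖ξ t‖ ^ m ≤ (C₀ + |lam| + 2) / c₀ := by
        rw [le_div_iff₀ hc₀]; linarith [mul_comm c₀ (‖ξ t‖ ^ m)]
      exact h7.trans (le_max_left _ _)
    calc ‖ξ t‖ = (‖ξ t‖ ^ m) ^ (1 / m) := by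
          rw [← Real.rpow_mul (norm_nonneg _), mul_one_div_cancel hm.ne', Real.rpow_one]
      _ ≤ P ^ (1 / m) := Real.rpow_le_rpow (Real.rpow_nonneg (norm_nonneg _) _) hrp
          (by positivity)
      _ = M := hMdef.symm
  -- Lipschitz bound for the gradient of A0 on the momentum ball
  have hlip : ∀ a b : EuclideanSpace ℝ (Fin d), ‖a‖ ≤ M → ‖b‖ ≤ M →
      ‖gradient A0 b - gradient A0 a‖ ≤ L * ‖b - a‖ := by
    intro a b ha hb
    refine my_grad_lip A0 hA0 (convex_closedBall (0 : EuclideanSpace ℝ (Fin d)) M)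
      (fun z hz => ?_) (mem_closedBall_zero_iff.2 ha) (mem_closedBall_zero_iff.2 hb)
    have hzM : ‖z‖ ≤ M := mem_closedBall_zero_iff.1 hz
    have h2 : (1 + ‖z‖) ^ m ≤ K := Real.rpow_le_rpow (by positivity) (by linarith) hm.le
    calc ‖iteratedFDeriv ℝ 2 A0 z‖ ≤ cA 2 * (1 + ‖z‖) ^ m := hA0bd 2 z
      _ ≤ max (cA 2) 0 * (1 + ‖z‖) ^ m :=
          mul_le_mul_of_nonneg_right (le_max_left _ _) (by positivity)
      _ ≤ max (cA 2) 0 * K := mul_le_mul_of_nonneg_left h2 (le_max_right _ _)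
      _ = L := hLdef.symm
  -- decomposition of x-derivative
  have hxdot : ∀ t ∈ Set.Ici (0 : ℝ),
      gradient (fun ξ' => A0 ξ' + V (x t) ξ') (ξ t)
        = gradient A0 (ξ t) + gradient (fun ξ' => V (x t) ξ') (ξ t) :=
    fun t _ => my_grad_add _ _ _ (hA0d _) ((hVξd (x t)) _)
  -- ξ-derivative is the V-gradient
  have hxidot : ∀ t : ℝ, gradient (fun x' => A0 (ξ t) + V x' (ξ t)) (x t)
      = gradient (fun x' => V x' (ξ t)) (x t) := fun t => my_grad_const_add _ _ _
  -- decay bound for ∇ₓV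
  have hgradVx_decay : ∀ xx ξξ : EuclideanSpace ℝ (Fin d), ‖ξξ‖ ≤ M →
      ‖gradient (fun x' => V x' ξξ) xx‖ ≤ D * (1 + ‖xx‖) ^ (-δ - 1) := by
    intro xx ξξ hξξ
    have h0 : ‖gradient (fun x' => V x' ξξ) xx‖
        = ‖iteratedFDeriv ℝ 1 (fun x' => V x' ξξ) xx‖ := by
      rw [my_grad_norm, my_norm_iteratedFDeriv_one]
    have h1 : (fun x' => iteratedFDeriv ℝ 0 (fun ξ' => V x' ξ') ξξ)
        = ((continuousMultilinearCurryFin0 ℝ (EuclideanSpace ℝ (Fin d)) ℝ).symm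
            : ℝ ≃ₗᵢ[ℝ] _) ∘ (fun x' => V x' ξξ) := by
      funext x'
      rw [iteratedFDeriv_zero_eq_comp]
      rfl
    have h2 := hVbd 0 1 xx ξξ
    rw [h1, LinearIsometryEquiv.norm_iteratedFDeriv_comp_left] at h2
    push_cast at h2
    rw [h0]
    have hB : (0 : ℝ) ≤ (1 + ‖xx‖) ^ (-δ - 1) := Real.rpow_nonneg (by positivity) _
    have hKb : (1 + ‖ξξ‖) ^ m ≤ K := Real.rpow_le_rpow (by positivity) (by linarith) hm.le
    calc ‖iteratedFDeriv ℝ 1 (fun x' => V x' ξξ) xx‖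
        ≤ cV 0 1 * (1 + ‖ξξ‖) ^ m * (1 + ‖xx‖) ^ (-δ - 1) := h2
      _ ≤ D * (1 + ‖xx‖) ^ (-δ - 1) := by
          refine mul_le_mul_of_nonneg_right ?_ hB
          calc cV 0 1 * (1 + ‖ξξ‖) ^ m ≤ max (cV 0 1) 0 * (1 + ‖ξξ‖) ^ m :=
                mul_le_mul_of_nonneg_right (le_max_left _ _) (by positivity)
            _ ≤ max (cV 0 1) 0 * K := mul_le_mul_of_nonneg_left hKb (le_max_right _ _)
            _ ≤ D := by linarith
  -- geometric lower bound
  have hgeo : ∀ t : ℝ, 0 ≤ t → ε₁ * (‖x 0‖ + t * ‖v‖) ≤ ‖x 0 + t • v‖ := fun t ht =>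
    my_outgoing_norm_lower (x 0) v hη0 (by linarith) ht hcone
  -- the key bootstrap improvement step
  have key : ∀ T, 0 ≤ T → (∀ s ∈ Set.Icc (0 : ℝ) T, ‖ξ s - ξ 0‖ ≤ η') →
      (∀ t ∈ Set.Icc (0 : ℝ) T, ε₁ * ‖x 0‖ + ε₂ * t ≤ ‖x t‖) ∧ ‖ξ T - ξ 0‖ ≤ η' / 2 := by
    intro T hT hboot
    have hxlow : ∀ t ∈ Set.Icc (0 : ℝ) T, ε₁ * ‖x 0‖ + ε₂ * t ≤ ‖x t‖ := by
      intro t ht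
      have hsv : ∀ s : ℝ, HasDerivAt (fun u : ℝ => u • v) v s := fun s => by
        simpa using (hasDerivAt_id s).smul_const v
      have hder : ∀ s ∈ Set.Icc (0 : ℝ) t, HasDerivWithinAt (fun u => x u - u • v)
          (gradient (fun ξ' => A0 ξ' + V (x s) ξ') (ξ s) - v) (Set.Icc 0 t) s :=
        fun s hs => ((hx' s hs.1).sub (hsv s)).hasDerivWithinAt
      have hbd : ∀ s ∈ Set.Ico (0 : ℝ) t,
          ‖gradient (fun ξ' => A0 ξ' + V (x s) ξ') ( ξ s) - v‖ ≤ ε₂ := by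
        intro s hs
        have hsT : s ∈ Set.Icc (0 : ℝ) T := ⟨hs.1, le_trans hs.2.le ht.2⟩
        rw [hxdot s hs.1]
        have h1 : ‖gradient A0 (ξ s) - v‖ ≤ L * η' := by
          calc ‖gradient A0 (ξ s) - v‖ ≤ L * ‖ξ s - ξ 0‖ :=
                hlip (ξ 0) (ξ s) (hξM 0 Set.self_mem_Ici) (hξM s (Set.mem_Ici.2 hs.1))
            _ ≤ L * η' := mul_le_mul_of_nonneg_left (hboot s hsT) hL0
        have h2 : ‖gradient (fun ξ' => V (x s) ξ') (ξ s)‖ ≤ ε := hVξ _ _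
        have h3 : L * η' ≤ ε₂ / 2 := by
          have h5 : η' ≤ ε₂ / (2 * (L + 1)) := min_le_right _ _
          have h6 : L * η' ≤ L * (ε₂ / (2 * (L + 1))) := mul_le_mul_of_nonneg_left h5 hL0
          have h7 : L * (ε₂ / (2 * (L + 1))) ≤ ε₂ / 2 := by
            rw [mul_div_assoc', div_le_div_iff₀ (by linarith) (by norm_num)]
            nlinarith
          linarith
        have h4 : ε ≤ ε₂ / 2 := min_le_right _ _
        have h8 : gradient A0 (ξ s) + gradient (fun ξ' => V (x s) ξ') (ξ s) - v
            = (gradient A0 (ξ s) - v) + gradient (fun ξ' => V (x s) ξ') (ξ s) := by abel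
        rw [h8]
        calc ‖(gradient A0 (ξ s) - v) + gradient (fun ξ' => V (x s) ξ') (ξ s)‖
            ≤ ‖gradient A0 (ξ s) - v‖ + ‖gradient (fun ξ' => V (x s) ξ') (ξ s)‖ :=
              norm_add_le _ _
          _ ≤ ε₂ := by linarith
      have hmv := norm_image_sub_le_of_norm_deriv_le_segment' hder hbd t
        (Set.right_mem_Icc.2 ht.1)
      have hmv' : ‖x t - x 0 - t • v‖ ≤ ε₂ * t := by
        have h9 : x t - t • v - (x 0 - (0 : ℝ) • v) = x t - x 0 - t • v := by
          rw [zero_smul, sub_zero]; abel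
        rw [h9] at hmv
        simpa using hmv
      have htri : ‖x 0 + t • v‖ ≤ ‖x t‖ + ‖x t - x 0 - t • v‖ := by
        have h10 : x 0 + t • v = x t - (x t - x 0 - t • v) := by abel
        rw [h10]
        exact norm_sub_le _ _
      have hg := hgeo t ht.1
      have hvlow : ε₀ / 2 ≤ ‖v‖ := hv0
      have h11 : 2 * (ε₂ * t) ≤ ε₁ * (t * ‖v‖) := by
        have h12 := mul_le_mul_of_nonneg_left hvlow (mul_nonneg hε₁0.le ht.1)
        rw [hε₂def]
        nlinarith
      have h13 : ε₁ * (‖x 0‖ + t * ‖v‖) = ε₁ * ‖x 0‖ + ε₁ * (t * ‖v‖) := by ring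
      linarith
    refine ⟨hxlow, ?_⟩
    -- now the boundary comparison for ξ
    set B : ℝ → ℝ := fun u =>
      (D / (ε₂ * δ)) * ((ε₁ * ‖x 0‖) ^ (-δ) - (ε₁ * ‖x 0‖ + ε₂ * u) ^ (-δ)) with hBdef
    have hgpos : ∀ s : ℝ, 0 ≤ s → 0 < ε₁ * ‖x 0‖ + ε₂ * s := by
      intro s hs
      have := mul_pos hε₁0 hRpos
      nlinarith
    have hBderiv : ∀ s : ℝ, 0 ≤ s →
        HasDerivAt B (D * (ε₁ * ‖x 0‖ + ε₂ * s) ^ (-δ - 1)) s := by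
      intro s hs
      have h1 : HasDerivAt (fun u : ℝ => ε₁ * ‖x 0‖ + ε₂ * u) ε₂ s := by
        exact (((hasDerivAt_id s).const_mul ε₂).const_add (ε₁ * ‖x 0‖)).congr_deriv (by simp)
      have h2 := (Real.hasDerivAt_rpow_const
        (x := ε₁ * ‖x 0‖ + ε₂ * s) (p := -δ) (Or.inl (hgpos s hs).ne')).comp s h1
      have h3 := (h2.const_sub ((ε₁ * ‖x 0‖) ^ (-δ))).const_mul (D / (ε₂ * δ))
      refine h3.congr_deriv ?_
      rw [div_mul_eq_mul_div, div_eq_iff (by positivity)]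
      ring
    have hcontξ : ContinuousOn (fun s => ξ s - ξ 0) (Set.Icc 0 T) := fun s hs =>
      (((hξ' s hs.1).continuousAt).sub continuousAt_const).continuousWithinAt
    have hfd : ∀ s ∈ Set.Ico (0 : ℝ) T, HasDerivWithinAt (fun u => ξ u - ξ 0)
        (-gradient (fun x' => A0 (ξ s) + V x' (ξ s)) (x s)) (Set.Ici s) s :=
      fun s hs => ((hξ' s hs.1).sub_const _).hasDerivWithinAt
    have hbound : ∀ s ∈ Set.Ico (0 : ℝ) T,
        ‖-gradient (fun x' => A0 (ξ s) + V x' (ξ s)) (x s)‖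
          ≤ D * (ε₁ * ‖x 0‖ + ε₂ * s) ^ (-δ - 1) := by
      intro s hs
      rw [norm_neg, hxidot s]
      have hxl : ε₁ * ‖x 0‖ + ε₂ * s ≤ ‖x s‖ := hxlow s ⟨hs.1, hs.2.le⟩
      have h1 := hgradVx_decay (x s) (ξ s) (hξM s (Set.mem_Ici.2 hs.1))
      have h2 : (1 + ‖x s‖ : ℝ) ^ (-δ - 1) ≤ (ε₁ * ‖x 0‖ + ε₂ * s) ^ (-δ - 1) :=
        Real.rpow_le_rpow_of_nonpos (hgpos s hs.1) (by linarith [norm_nonneg (x s)])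
          (by linarith)
      calc ‖gradient (fun x' => V x' (ξ s)) (x s)‖ ≤ D * (1 + ‖x s‖) ^ (-δ - 1) := h1
        _ ≤ D * (ε₁ * ‖x 0‖ + ε₂ * s) ^ (-δ - 1) := mul_le_mul_of_nonneg_left h2 hD0.le
    have hB0 : ‖ξ 0 - ξ 0‖ ≤ B 0 := by
      rw [hBdef]
      simp
    have hBcont : ContinuousOn B (Set.Icc 0 T) := fun s hs =>
      (hBderiv s hs.1).continuousAt.continuousWithinAt
    have himp := image_norm_le_of_norm_deriv_right_le_deriv_boundary' hcontξ hfd hB0 hBcont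
      (fun s hs => (hBderiv s hs.1).hasDerivWithinAt) hbound (Set.right_mem_Icc.2 hT)
    refine le_trans himp ?_
    have h1 : (0 : ℝ) ≤ (ε₁ * ‖x 0‖ + ε₂ * T) ^ (-δ) := Real.rpow_nonneg (hgpos T hT).le _
    have hDd : 0 < D / (ε₂ * δ) := div_pos hD0 (by positivity)
    have h2 : (ε₁ * ‖x 0‖) ^ (-δ) ≤ c := by
      have hcR : c ^ (-(1 / δ)) ≤ ε₁ * ‖x 0‖ := by
        have h3 : (1 / ε₁) * c ^ (-(1 / δ)) ≤ ‖x 0‖ := le_trans (le_max_right _ _) hR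
        calc c ^ (-(1 / δ)) = ε₁ * ((1 / ε₁) * c ^ (-(1 / δ))) := by
              field_simp
          _ ≤ ε₁ * ‖x 0‖ := mul_le_mul_of_nonneg_left h3 hε₁0.le
      have hcp : 0 < c ^ (-(1 / δ)) := Real.rpow_pos_of_pos hc0 _
      calc (ε₁ * ‖x 0‖) ^ (-δ) ≤ (c ^ (-(1 / δ))) ^ (-δ) :=
            Real.rpow_le_rpow_of_nonpos hcp hcR (by linarith)
        _ = c := by
            rw [← Real.rpow_mul hc0.le]
            have : -(1 / δ) * -δ = 1 := by field_simp
            rw [this, Real.rpow_one]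
    calc B T ≤ (D / (ε₂ * δ)) * (ε₁ * ‖x 0‖) ^ (-δ) := by
          rw [hBdef]
          have := mul_le_mul_of_nonneg_left (by linarith :
            (ε₁ * ‖x 0‖) ^ (-δ) - (ε₁ * ‖x 0‖ + ε₂ * T) ^ (-δ) ≤ (ε₁ * ‖x 0‖) ^ (-δ)) hDd.le
          exact this
      _ ≤ (D / (ε₂ * δ)) * c := mul_le_mul_of_nonneg_left h2 hDd.le
      _ = η' / 2 := by
          rw [hcdef]
          field_simp
  -- global bootstrap
  have hglobal : ∀ t ∈ Set.Ici (0 : ℝ), ‖ξ t - ξ 0‖ ≤ η' := by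
    by_contra hcon
    push_neg at hcon
    obtain ⟨t₁, ht₁0, ht₁⟩ := hcon
    set Bs : Set ℝ := {t | 0 ≤ t ∧ η' ≤ ‖ξ t - ξ 0‖} with hBsdef
    have hne : Bs.Nonempty := ⟨t₁, ht₁0, ht₁.le⟩
    have hbdd : BddBelow Bs := ⟨0, fun t ht => ht.1⟩
    have ht₀0 : 0 ≤ sInf Bs := le_csInf hne fun t ht => ht.1
    obtain ⟨u, -, hu, humem⟩ := exists_seq_tendsto_sInf hne hbdd
    have hcξ : ContinuousAt ξ (sInf Bs) := (hξ' (sInf Bs) ht₀0).continuousAt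
    have ht₀mem : η' ≤ ‖ξ (sInf Bs) - ξ 0‖ := by
      have h1 : Filter.Tendsto (fun n => ‖ξ (u n) - ξ 0‖) Filter.atTop
          (nhds ‖ξ (sInf Bs) - ξ 0‖) :=
        ((hcξ.tendsto.comp hu).sub tendsto_const_nhds).norm
      exact ge_of_tendsto h1 (Filter.Eventually.of_forall fun n => (humem n).2)
    have ht₀pos : 0 < sInf Bs := by
      rcases ht₀0.lt_or_eq with h | h
      · exact h
      · exfalso
        rw [← h] at ht₀mem
        simp at ht₀mem
        linarith
    have hlt : ∀ s ∈ Set.Ico (0 : ℝ) (sInf Bs), ‖ξ s - ξ 0‖ ≤ η' := by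
      intro s hs
      by_contra hcon2
      push_neg at hcon2
      have := csInf_le hbdd (show s ∈ Bs from ⟨hs.1, hcon2.le⟩)
      linarith [hs.2]
    have hat : ‖ξ (sInf Bs) - ξ 0‖ ≤ η' := by
      have hws : ContinuousWithinAt (fun s => ‖ξ s - ξ 0‖) (Set.Iio (sInf Bs)) (sInf Bs) :=
        ((hcξ.sub continuousAt_const).norm).continuousWithinAt
      refine le_of_tendsto hws ?_
      filter_upwards [Ioo_mem_nhdsLT_of_mem (Set.mem_Ioc.2 ⟨ht₀pos, le_refl (sInf Bs)⟩)]
        with s hs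
      exact hlt s ⟨hs.1.le, hs.2⟩
    have hIcc : ∀ s ∈ Set.Icc (0 : ℝ) (sInf Bs), ‖ξ s - ξ 0‖ ≤ η' := by
      intro s hs
      rcases lt_or_eq_of_le hs.2 with h | h
      · exact hlt s ⟨hs.1, h⟩
      · rw [h]; exact hat
    have := (key (sInf Bs) ht₀0 hIcc).2
    linarith
  -- conclusion
  intro t ht
  obtain ⟨hx_all, -⟩ := key t ht fun s hs => hglobal s hs.1
  exact ⟨le_trans (hglobal t ht) (min_le_left _ _),
    hx_all t (Set.right_mem_Icc.2 ht)⟩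
end
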